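/- arXiv:1404.0202 — 6 statements merged into one kernel-verified Lean document; each statement's English description precedes it below -/
import Mathlib

section
/- Let σ > 0, a > 1 and τ ∈ (0, 1/√a). Then for every y ≠ 0: I_{3/2}(y) ≥ τ³/5 + σ² (τ/y²) ( exp(y²/(2aσ²)) − exp(τ² y²/(2σ²)) ) + (σ²/(√a · y²)) ( exp(y²/(2σ²)) − exp(y²/(2aσ²)) ). -/
open MeasureTheory ProbabilityTheory Real Filter Set

/-- The integral `I_k(y) = ∫₀¹ z^k (τ² + (1−τ²)z)⁻¹ exp(y² z/(2σ²)) dz`. -/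
noncomputable def hsI (σ τ k y : ℝ) : ℝ :=
  ∫ z in (0:ℝ)..1, z ^ k * (τ ^ 2 + (1 - τ ^ 2) * z)⁻¹ * Real.exp (y ^ 2 * z / (2 * σ ^ 2))

/-- The horseshoe estimator `T_τ(y) = y · I_{1/2}(y)/I_{−1/2}(y)`. -/
noncomputable def hsT (σ τ y : ℝ) : ℝ :=
  y * hsI σ τ (1/2) y / hsI σ τ (-(1/2)) y

/-- The horseshoe posterior variance
`V_τ(y) = σ² I_{1/2}/I_{−1/2} + y² (I_{3/2}/I_{−1/2} − (I_{1/2}/I_{−1/2})²)`. -/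
noncomputable def hsV (σ τ y : ℝ) : ℝ :=
  σ ^ 2 * (hsI σ τ (1/2) y / hsI σ τ (-(1/2)) y)
    + y ^ 2 * (hsI σ τ (3/2) y / hsI σ τ (-(1/2)) y
        - (hsI σ τ (1/2) y / hsI σ τ (-(1/2)) y) ^ 2)

/-- The law of `Y` with independent coordinates `Y_i ~ N(θ i, σ²)`. -/
noncomputable def gaussPi (σ : ℝ) {n : ℕ} (θ : Fin n → ℝ) : Measure (Fin n → ℝ) :=
  Measure.pi fun i => gaussianReal (θ i) (Real.toNNReal (σ ^ 2))

/-- `θ` is nearly black: at most `p` nonzero coordinates. -/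
def nearlyBlack {n : ℕ} (θ : Fin n → ℝ) (p : ℕ) : Prop :=
  {i | θ i ≠ 0}.ncard ≤ p

/-- The horseshoe prior density on ℝ. -/
noncomputable def hsPriorDensity (σ τ t : ℝ) : ℝ :=
  ∫ l in Set.Ioi (0:ℝ),
    (2 / (π * (1 + l ^ 2))) * (σ * τ * l * Real.sqrt (2 * π))⁻¹ *
      Real.exp (-(t ^ 2) / (2 * σ ^ 2 * τ ^ 2 * l ^ 2))

/-- The horseshoe posterior mass of a set `A` given data `y`. -/
noncomputable def hsPost (σ τ : ℝ) {n : ℕ} (y : Fin n → ℝ) (A : Set (Fin n → ℝ)) : ℝ :=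
  (∫ θ in A, (∏ i, hsPriorDensity σ τ (θ i)) *
      Real.exp (-(∑ i, (y i - θ i) ^ 2) / (2 * σ ^ 2))) /
  ∫ θ : Fin n → ℝ, (∏ i, hsPriorDensity σ τ (θ i)) *
      Real.exp (-(∑ i, (y i - θ i) ^ 2) / (2 * σ ^ 2))

/-- Lemma A.1, bound (A.1): lower bound on `I_{3/2}`. -/
theorem hsI_three_halves_lower (σ a τ : ℝ) (hσ : 0 < σ) (ha : 1 < a)
    (hτ : 0 < τ) (hτa : τ < 1 / Real.sqrt a) :
    ∀ y : ℝ, y ≠ 0 →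
      τ ^ 3 / 5 +
        σ ^ 2 * (τ / y ^ 2) *
          (Real.exp (y ^ 2 / (2 * a * σ ^ 2)) - Real.exp (τ ^ 2 * y ^ 2 / (2 * σ ^ 2))) +
        σ ^ 2 / (Real.sqrt a * y ^ 2) *
          (Real.exp (y ^ 2 / (2 * σ ^ 2)) - Real.exp (y ^ 2 / (2 * a * σ ^ 2))) ≤
      hsI σ τ (3/2) y := by
  intro y hy
  have ha0 : 0 < a := lt_trans one_pos ha
  have hsa1 : 1 < Real.sqrt a := by
    rw [show (1:ℝ) = Real.sqrt 1 by simp]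
    exact Real.sqrt_lt_sqrt (by norm_num) ha
  have hsa0 : 0 < Real.sqrt a := lt_trans one_pos hsa1
  have hτ2a : τ ^ 2 < 1 / a := by
    have := mul_lt_mul'' hτa hτa hτ.le hτ.le
    calc τ ^ 2 = τ * τ := sq τ
    _ < (1 / Real.sqrt a) * (1 / Real.sqrt a) := this
    _ = 1 / a := by
        rw [div_mul_div_comm, one_mul, Real.mul_self_sqrt ha0.le]
  have h1a1 : 1 / a < 1 := by
    rw [div_lt_one ha0]; exact ha
  have hτ21 : τ ^ 2 < 1 := lt_trans hτ2a h1a1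
  have hσ2 : (0:ℝ) < σ ^ 2 := by positivity
  have hy2 : (0:ℝ) < y ^ 2 := by positivity
  set c : ℝ := y ^ 2 / (2 * σ ^ 2) with hcdef
  have hc0 : 0 < c := by positivity
  set f : ℝ → ℝ := fun z => z ^ (3/2 : ℝ) * (τ ^ 2 + (1 - τ ^ 2) * z)⁻¹ *
      Real.exp (y ^ 2 * z / (2 * σ ^ 2)) with hfdef
  -- positivity of denominator on [0,1]
  have hden : ∀ z ∈ Icc (0:ℝ) 1, 0 < τ ^ 2 + (1 - τ ^ 2) * z := by
    intro z hz
    have := hz.1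
    nlinarith [sq_nonneg τ]
  -- continuity of f on [0,1]
  have hfc : ContinuousOn f (Icc (0:ℝ) 1) := by
    apply ContinuousOn.mul
    · apply ContinuousOn.mul
      · exact (continuousOn_id.rpow_const (fun x _ => Or.inr (by norm_num)))
      · apply ContinuousOn.inv₀
        · fun_prop
        · intro z hz; exact (hden z hz).ne'
    · fun_prop
  have hint : ∀ u v : ℝ, u ∈ Icc (0:ℝ) 1 → v ∈ Icc (0:ℝ) 1 → IntervalIntegrable f volume u v := by
    intro u v hu hv
    apply ContinuousOn.intervalIntegrable
    apply hfc.mono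
    rw [show Icc (0:ℝ) 1 = uIcc 0 1 from (uIcc_of_le (by norm_num)).symm]
    rw [show Icc (0:ℝ) 1 = uIcc 0 1 from (uIcc_of_le (by norm_num)).symm] at hu hv
    exact Set.uIcc_subset_uIcc hu hv
  -- membership facts
  have m0 : (0:ℝ) ∈ Icc (0:ℝ) 1 := by constructor <;> norm_num
  have mτ : τ^2 ∈ Icc (0:ℝ) 1 := ⟨by positivity, hτ21.le⟩
  have ma : 1/a ∈ Icc (0:ℝ) 1 := ⟨by positivity, h1a1.le⟩
  have m1 : (1:ℝ) ∈ Icc (0:ℝ) 1 := by constructor <;> norm_num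
  -- split the integral
  have hsplit : hsI σ τ (3/2) y =
      (∫ z in (0:ℝ)..(τ^2), f z) + (∫ z in (τ^2)..(1/a), f z) + (∫ z in (1/a)..(1:ℝ), f z) := by
    rw [hsI]
    rw [← intervalIntegral.integral_add_adjacent_intervals (hint 0 (1/a) m0 ma) (hint (1/a) 1 ma m1),
      ← intervalIntegral.integral_add_adjacent_intervals (hint 0 (τ^2) m0 mτ) (hint (τ^2) (1/a) mτ ma)]
  -- exponential integral formula
  have hexpint : ∀ u v : ℝ, (∫ z in u..v, Real.exp (c * z)) =
      (Real.exp (c * v) - Real.exp (c * u)) / c := by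
    intro u v
    rw [intervalIntegral.integral_comp_mul_left (fun x => Real.exp x) hc0.ne',
      integral_exp, smul_eq_mul]
    field_simp
  -- Piece 1
  have h1 : τ ^ 3 / 5 ≤ ∫ z in (0:ℝ)..(τ^2), f z := by
    have heq : (∫ z in (0:ℝ)..(τ^2), z ^ (3/2:ℝ) * (2*τ^2)⁻¹) = τ^3/5 := by
      rw [intervalIntegral.integral_mul_const, integral_rpow (Or.inl (by norm_num))]
      have h5 : ((0:ℝ)) ^ ((3:ℝ)/2 + 1) = 0 := by
        rw [Real.zero_rpow (by norm_num)]
      have h6 : ((τ:ℝ)^2) ^ ((3:ℝ)/2 + 1) = τ ^ (5:ℕ) := by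
        rw [← Real.rpow_natCast τ 2, ← Real.rpow_mul hτ.le,
          show ((2:ℕ):ℝ) * (3/2+1) = ((5:ℕ):ℝ) by norm_num, Real.rpow_natCast]
      rw [h5, h6]
      field_simp
      ring
    rw [← heq]
    apply intervalIntegral.integral_mono_on (by positivity) ?_ (hint 0 (τ^2) m0 mτ)
    · intro z hz
      have hz0 : 0 ≤ z := hz.1
      have hzm : z ∈ Icc (0:ℝ) 1 := ⟨hz.1, le_trans hz.2 hτ21.le⟩
      have hd := hden z hzm
      have hd2 : τ ^ 2 + (1 - τ ^ 2) * z ≤ 2 * τ^2 := by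
        nlinarith [hz.2, sq_nonneg τ]
      have hzp : (0:ℝ) ≤ z ^ (3/2:ℝ) := Real.rpow_nonneg hz0 _
      have he1 : (1:ℝ) ≤ Real.exp (y ^ 2 * z / (2 * σ ^ 2)) := by
        rw [← Real.exp_zero]
        apply Real.exp_le_exp.2; positivity
      calc z ^ (3/2:ℝ) * (2*τ^2)⁻¹
          ≤ z ^ (3/2:ℝ) * (τ ^ 2 + (1 - τ ^ 2) * z)⁻¹ := by
            apply mul_le_mul_of_nonneg_left _ hzp
            exact inv_anti₀ hd hd2
        _ ≤ f z := by
            simp only [hfdef]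
            nlinarith [mul_nonneg hzp (inv_nonneg.2 hd.le)]
    · apply ContinuousOn.intervalIntegrable
      apply ContinuousOn.mul _ continuousOn_const
      rw [Set.uIcc_of_le (by positivity)]
      exact (continuousOn_id.rpow_const (fun x _ => Or.inr (by norm_num)))
  -- generic lower bound on [u,v] with z^{1/2} ≥ t there
  have key : ∀ u v t : ℝ, 0 < t → u ∈ Icc (0:ℝ) 1 → v ∈ Icc (0:ℝ) 1 → u ≤ v →
      (∀ z ∈ Icc u v, t ≤ z ^ ((1:ℝ)/2) ∧ τ^2 ≤ z ∧ 0 < z) →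
      (t/2) * ((Real.exp (c * v) - Real.exp (c * u)) / c) ≤ ∫ z in u..v, f z := by
    intro u v t ht hu hv huv hzs
    have heq : (∫ z in u..v, (t/2) * Real.exp (c * z)) =
        (t/2) * ((Real.exp (c * v) - Real.exp (c * u)) / c) := by
      rw [intervalIntegral.integral_const_mul, hexpint]
    rw [← heq]
    apply intervalIntegral.integral_mono_on huv ?_ (hint u v hu hv)
    · intro z hz
      obtain ⟨hzt, hzτ, hz0⟩ := hzs z hz
      have hzm : z ∈ Icc (0:ℝ) 1 := ⟨hz0.le, le_trans hz.2 hv.2⟩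
      have hd := hden z hzm
      have hd2 : τ ^ 2 + (1 - τ ^ 2) * z ≤ 2 * z := by
        nlinarith [hzm.2, sq_nonneg τ]
      have h32 : z ^ ((3:ℝ)/2) = z ^ ((1:ℝ)/2) * z := by
        rw [show (3:ℝ)/2 = 1/2 + 1 by norm_num, Real.rpow_add hz0, Real.rpow_one]
      have hnum : t * z ≤ z ^ ((3:ℝ)/2) := by
        rw [h32]
        exact mul_le_mul_of_nonneg_right hzt hz0.le
      have hfrac : t/2 ≤ z ^ ((3:ℝ)/2) * (τ ^ 2 + (1 - τ ^ 2) * z)⁻¹ := by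
        have e : t/2 = (t*z)/(2*z) := by field_simp
        rw [e, ← div_eq_mul_inv]
        exact div_le_div₀ (Real.rpow_nonneg hz0.le _) hnum hd hd2
      have hexp : 0 < Real.exp (y ^ 2 * z / (2 * σ ^ 2)) := Real.exp_pos _
      have hce : c * z = y ^ 2 * z / (2 * σ ^ 2) := by rw [hcdef]; ring
      simp only [hfdef, ← hce]
      calc t/2 * Real.exp (c * z)
          ≤ (z ^ ((3:ℝ)/2) * (τ ^ 2 + (1 - τ ^ 2) * z)⁻¹) * Real.exp (c * z) := by
            apply mul_le_mul_of_nonneg_right hfrac (Real.exp_pos _).le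
        _ = _ := by ring
    · exact (Continuous.continuousOn (by fun_prop)).intervalIntegrable
  -- Piece 2
  have hsq2 : ((τ:ℝ)^2) ^ ((1:ℝ)/2) = τ := by
    rw [← Real.rpow_natCast τ 2, ← Real.rpow_mul hτ.le]
    norm_num
  have h2 : (τ/2) * ((Real.exp (c * (1/a)) - Real.exp (c * (τ^2))) / c) ≤
      ∫ z in (τ^2)..(1/a), f z := by
    apply key (τ^2) (1/a) τ hτ mτ ma hτ2a.le
    intro z hz
    have hz0 : 0 < z := lt_of_lt_of_le (by positivity) hz.1
    refine ⟨?_, hz.1, hz0⟩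
    calc τ = ((τ:ℝ)^2) ^ ((1:ℝ)/2) := hsq2.symm
      _ ≤ z ^ ((1:ℝ)/2) := Real.rpow_le_rpow (by positivity) hz.1 (by norm_num)
  -- Piece 3
  have hsq3 : ((1:ℝ)/a) ^ ((1:ℝ)/2) = 1 / Real.sqrt a := by
    rw [← Real.sqrt_eq_rpow, one_div, one_div, Real.sqrt_inv]
  have h3 : ((1/Real.sqrt a)/2) * ((Real.exp (c * 1) - Real.exp (c * (1/a))) / c) ≤
      ∫ z in (1/a)..(1:ℝ), f z := by
    apply key (1/a) 1 (1/Real.sqrt a) (by positivity) ma m1 h1a1.le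
    intro z hz
    have hz0 : 0 < z := lt_of_lt_of_le (by positivity) hz.1
    refine ⟨?_, le_trans hτ2a.le hz.1, hz0⟩
    calc 1/Real.sqrt a = ((1:ℝ)/a) ^ ((1:ℝ)/2) := hsq3.symm
      _ ≤ z ^ ((1:ℝ)/2) := Real.rpow_le_rpow (by positivity) hz.1 (by norm_num)
  -- exponent argument identities
  have e1 : c * (1/a) = y ^ 2 / (2 * a * σ ^ 2) := by rw [hcdef]; field_simp
  have e2 : c * (τ^2) = τ ^ 2 * y ^ 2 / (2 * σ ^ 2) := by rw [hcdef]; ring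
  have e3 : c * 1 = y ^ 2 / (2 * σ ^ 2) := by rw [hcdef]; ring
  -- coefficient identities
  have eq2 : σ ^ 2 * (τ / y ^ 2) *
      (Real.exp (y ^ 2 / (2 * a * σ ^ 2)) - Real.exp (τ ^ 2 * y ^ 2 / (2 * σ ^ 2))) =
      (τ/2) * ((Real.exp (c * (1/a)) - Real.exp (c * (τ^2))) / c) := by
    rw [e1, e2, hcdef]
    field_simp
  have eq3 : σ ^ 2 / (Real.sqrt a * y ^ 2) *
      (Real.exp (y ^ 2 / (2 * σ ^ 2)) - Real.exp (y ^ 2 / (2 * a * σ ^ 2))) =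
      ((1/Real.sqrt a)/2) * ((Real.exp (c * 1) - Real.exp (c * (1/a))) / c) := by
    rw [e1, e3, hcdef]
    field_simp
  rw [hsplit, eq2, eq3]
  exact add_le_add (add_le_add h1 h2) h3
end

section
/- Let σ > 0. (i) For every τ ∈ (0,1) and every y ≠ 0: I_{1/2}(y) ≥ τ/3 + (σ²/y²) ( exp(y²/(2σ²)) − exp(τ² y²/(2σ²)) ). (ii) For every a > 1, every τ ∈ (0, 1/√a) and every y ≠ 0: I_{1/2}(y) ≤ (2/3) exp(τ² y²/(2σ²)) τ + 2 exp(y²/(2aσ²)) (1/√a − τ) + (2√a σ²/y²) ( exp(y²/(2σ²)) − exp(y²/(2aσ²)) ). -/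
open MeasureTheory ProbabilityTheory Real Filter Set

/-!
Write `c = y²/(2σ²)`, so that `I_{1/2}(y) = ∫₀¹ √z e^{cz} / D(z) dz` with
`D(z) = τ² + (1−τ²)z`, and on `[0,1]` we have `max(τ², z) ≤ D(z) ≤ τ² + z`.
For the lower bound split at `τ²`: on `[0,τ²]` use `D ≤ 2τ²` and `e^{cz} ≥ 1`, on `[τ²,1]`
use `D ≤ 2z ≤ 2√z`. For the upper bound split at `τ²` and `t² = 1/a` (with `t = 1/√a`):
on `[0,τ²]` use `D ≥ τ²` and `e^{cz} ≤ e^{cτ²}`, on `[τ²,t²]` use `√z/D ≤ 1/√z` and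
`e^{cz} ≤ e^{ct²}`, on `[t²,1]` use `√z/D ≤ 1/√z ≤ 1/t`. Every resulting integral is elementary.
-/
open intervalIntegral

theorem integral_exp_mul {c : ℝ} (hc : c ≠ 0) (a b : ℝ) :
    ∫ z in a..b, exp (c * z) = (exp (c * b) - exp (c * a)) / c := by
  rw [integral_comp_mul_left (fun x => exp x) hc, integral_exp, smul_eq_mul, inv_mul_eq_div]

theorem integral_sqrt_zero_sq {t : ℝ} (ht : 0 ≤ t) : ∫ z in (0:ℝ)..t ^ 2, √z = 2 / 3 * t ^ 3 := by
  have h32 : (t ^ 2) ^ (1 / 2 + 1 : ℝ) = t ^ 3 := by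
    rw [← rpow_natCast t 2, ← rpow_mul ht]; norm_num
  simp_rw [sqrt_eq_rpow]
  rw [integral_rpow (Or.inl (by norm_num)), h32, zero_rpow (by norm_num)]
  ring

theorem integral_inv_sqrt_sq_sq {s t : ℝ} (hs : 0 ≤ s) (ht : 0 ≤ t) :
    ∫ z in s ^ 2..t ^ 2, (√z)⁻¹ = 2 * (t - s) := by
  have hrpow : ∀ z ∈ uIcc (s ^ 2) (t ^ 2), (√z)⁻¹ = z ^ (-(1 / 2) : ℝ) := fun z hz => by
    rw [rpow_neg ((le_min (sq_nonneg s) (sq_nonneg t)).trans hz.1), sqrt_eq_rpow]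
  rw [integral_congr hrpow, integral_rpow (Or.inl (by norm_num)), show (-(1 / 2) + 1 : ℝ) = 1 / 2 by
    norm_num, ← sqrt_eq_rpow, ← sqrt_eq_rpow, sqrt_sq hs, sqrt_sq ht]
  ring

noncomputable def hsHalfIntegrand (τ c z : ℝ) : ℝ :=
  √z / (τ ^ 2 + (1 - τ ^ 2) * z) * exp (c * z)

theorem hsI_one_half_eq_integral (σ τ y : ℝ) :
    hsI σ τ (1/2) y = ∫ z in (0:ℝ)..1, hsHalfIntegrand τ (y ^ 2 / (2 * σ ^ 2)) z := by
  unfold hsI hsHalfIntegrand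
  congr 1 with z
  rw [sqrt_eq_rpow, div_eq_mul_inv (z ^ _), mul_div_right_comm]

section Denominator

variable {τ z : ℝ}

theorem sq_add_one_sub_sq_mul_pos (hτ : τ ≠ 0) (hz0 : 0 ≤ z) (hz1 : z ≤ 1) :
    0 < τ ^ 2 + (1 - τ ^ 2) * z := by
  rcases hz0.eq_or_lt with rfl | hz0
  · simpa using pow_pos (abs_pos.2 hτ) 2
  · nlinarith [mul_nonneg (sq_nonneg τ) (sub_nonneg.2 hz1)]

theorem le_sq_add_one_sub_sq_mul (hz1 : z ≤ 1) : z ≤ τ ^ 2 + (1 - τ ^ 2) * z := by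
  nlinarith [sq_nonneg τ]

theorem sq_le_sq_add_one_sub_sq_mul (hτ1 : τ ^ 2 ≤ 1) (hz0 : 0 ≤ z) :
    τ ^ 2 ≤ τ ^ 2 + (1 - τ ^ 2) * z := by
  nlinarith

theorem sq_add_one_sub_sq_mul_le (hz0 : 0 ≤ z) : τ ^ 2 + (1 - τ ^ 2) * z ≤ τ ^ 2 + z := by
  nlinarith [sq_nonneg τ]

end Denominator

section Integrand

variable {τ c z : ℝ}

theorem continuousOn_hsHalfIntegrand (hτ : τ ≠ 0) (c : ℝ) :
    ContinuousOn (hsHalfIntegrand τ c) (Icc 0 1) := by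
  unfold hsHalfIntegrand
  refine ContinuousOn.mul (ContinuousOn.div (by fun_prop) (by fun_prop) ?_) (by fun_prop)
  exact fun z hz => (sq_add_one_sub_sq_mul_pos hτ hz.1 hz.2).ne'

theorem sqrt_div_le_hsHalfIntegrand (hτ : τ ≠ 0) (hc : 0 ≤ c) (hz0 : 0 ≤ z) (hz : z ≤ τ ^ 2)
    (hz1 : z ≤ 1) : √z / (2 * τ ^ 2) ≤ hsHalfIntegrand τ c z := by
  have hD := sq_add_one_sub_sq_mul_pos hτ hz0 hz1
  calc √z / (2 * τ ^ 2) ≤ √z / (τ ^ 2 + (1 - τ ^ 2) * z) := by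
        gcongr; linarith [sq_add_one_sub_sq_mul_le (τ := τ) hz0]
    _ ≤ hsHalfIntegrand τ c z := le_mul_of_one_le_right (by positivity) (one_le_exp (by positivity))

theorem exp_div_two_le_hsHalfIntegrand (hτ : τ ≠ 0) (hz : τ ^ 2 ≤ z) (hz1 : z ≤ 1) :
    exp (c * z) / 2 ≤ hsHalfIntegrand τ c z := by
  have hz0 : 0 ≤ z := (sq_nonneg τ).trans hz
  have hD := sq_add_one_sub_sq_mul_pos hτ hz0 hz1
  have hz_le_sqrt : z ≤ √z := le_sqrt_of_sq_le (by nlinarith)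
  rw [hsHalfIntegrand, div_eq_inv_mul]
  gcongr
  rw [le_div_iff₀ hD]
  linarith [sq_add_one_sub_sq_mul_le (τ := τ) hz0]

theorem hsHalfIntegrand_le_sqrt_div_sq (hτ : τ ≠ 0) (hτ1 : τ ^ 2 ≤ 1) (hc : 0 ≤ c) (hz0 : 0 ≤ z)
    (hz : z ≤ τ ^ 2) : hsHalfIntegrand τ c z ≤ √z / τ ^ 2 * exp (c * τ ^ 2) := by
  unfold hsHalfIntegrand
  gcongr
  exact sq_le_sq_add_one_sub_sq_mul hτ1 hz0

theorem hsHalfIntegrand_le_exp_div_sqrt (hz0 : 0 ≤ z) (hz1 : z ≤ 1) :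
    hsHalfIntegrand τ c z ≤ exp (c * z) / √z := by
  rcases hz0.eq_or_lt with rfl | hz0
  · simp [hsHalfIntegrand]
  calc hsHalfIntegrand τ c z ≤ √z / z * exp (c * z) := by
        unfold hsHalfIntegrand; gcongr; exact le_sq_add_one_sub_sq_mul hz1
    _ = exp (c * z) / √z := by rw [sqrt_div_self, inv_mul_eq_div]

theorem intervalIntegrable_hsHalfIntegrand (hτ : τ ≠ 0) (c : ℝ) {a b : ℝ} (ha : 0 ≤ a) (hab : a ≤ b)
    (hb : b ≤ 1) : IntervalIntegrable (hsHalfIntegrand τ c) volume a b :=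
  ((continuousOn_hsHalfIntegrand hτ c).mono (Icc_subset_Icc ha hb)).intervalIntegrable_of_Icc hab

end Integrand

section Integral

variable {τ t c : ℝ}

theorem integral_hsHalfIntegrand_ge (hτ0 : 0 < τ) (hτ1 : τ ≤ 1) (hc : 0 < c) :
    τ / 3 + (exp c - exp (c * τ ^ 2)) / (2 * c) ≤ ∫ z in (0:ℝ)..1, hsHalfIntegrand τ c z := by
  have hτ2 : τ ^ 2 ≤ 1 := pow_le_one₀ hτ0.le hτ1
  have hf : ∀ {a b : ℝ}, 0 ≤ a → a ≤ b → b ≤ 1 →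
      IntervalIntegrable (hsHalfIntegrand τ c) volume a b :=
    intervalIntegrable_hsHalfIntegrand hτ0.ne' c
  rw [← integral_add_adjacent_intervals (hf le_rfl (sq_nonneg τ) hτ2)
    (hf (sq_nonneg τ) hτ2 le_rfl)]
  gcongr ?_ + ?_
  · calc τ / 3 = ∫ z in (0:ℝ)..τ ^ 2, √z / (2 * τ ^ 2) := by
          rw [intervalIntegral.integral_div, integral_sqrt_zero_sq hτ0.le]; field_simp
      _ ≤ _ := integral_mono_on (sq_nonneg τ) (Continuous.intervalIntegrable (by fun_prop) _ _)
          (hf le_rfl (sq_nonneg τ) hτ2)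
          fun z hz => sqrt_div_le_hsHalfIntegrand hτ0.ne' hc.le hz.1 hz.2 (hz.2.trans hτ2)
  · calc (exp c - exp (c * τ ^ 2)) / (2 * c) = ∫ z in τ ^ 2..1, exp (c * z) / 2 := by
          rw [intervalIntegral.integral_div, integral_exp_mul hc.ne', mul_one]; ring
      _ ≤ _ := integral_mono_on hτ2 (Continuous.intervalIntegrable (by fun_prop) _ _)
          (hf (sq_nonneg τ) hτ2 le_rfl)
          fun z hz => exp_div_two_le_hsHalfIntegrand hτ0.ne' hz.1 hz.2

theorem integral_hsHalfIntegrand_le (hτ0 : 0 < τ) (hτt : τ ≤ t) (ht1 : t ≤ 1) (hc : 0 < c) :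
    ∫ z in (0:ℝ)..1, hsHalfIntegrand τ c z ≤ 2 / 3 * exp (c * τ ^ 2) * τ +
      2 * exp (c * t ^ 2) * (t - τ) + (exp c - exp (c * t ^ 2)) / (c * t) := by
  have ht0 : 0 < t := hτ0.trans_le hτt
  have hτt2 : τ ^ 2 ≤ t ^ 2 := pow_le_pow_left₀ hτ0.le hτt 2
  have ht2 : t ^ 2 ≤ 1 := pow_le_one₀ ht0.le ht1
  have hτ2 : τ ^ 2 ≤ 1 := hτt2.trans ht2
  have hf : ∀ {a b : ℝ}, 0 ≤ a → a ≤ b → b ≤ 1 →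
      IntervalIntegrable (hsHalfIntegrand τ c) volume a b :=
    intervalIntegrable_hsHalfIntegrand hτ0.ne' c
  rw [← integral_add_adjacent_intervals (hf le_rfl (sq_nonneg τ) hτ2)
      (hf (sq_nonneg τ) hτ2 le_rfl), ← integral_add_adjacent_intervals
      (hf (sq_nonneg τ) hτt2 ht2) (hf (sq_nonneg t) ht2 le_rfl), ← add_assoc]
  gcongr ?_ + ?_ + ?_
  · calc ∫ z in (0:ℝ)..τ ^ 2, hsHalfIntegrand τ c z
          ≤ ∫ z in (0:ℝ)..τ ^ 2, √z / τ ^ 2 * exp (c * τ ^ 2) :=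
          integral_mono_on (sq_nonneg τ) (hf le_rfl (sq_nonneg τ) hτ2)
            (Continuous.intervalIntegrable (by fun_prop) _ _)
            fun z hz => hsHalfIntegrand_le_sqrt_div_sq hτ0.ne' hτ2 hc.le hz.1 hz.2
      _ = 2 / 3 * exp (c * τ ^ 2) * τ := by
          rw [intervalIntegral.integral_mul_const, intervalIntegral.integral_div,
            integral_sqrt_zero_sq hτ0.le]
          field_simp
  · calc ∫ z in τ ^ 2..t ^ 2, hsHalfIntegrand τ c z
          ≤ ∫ z in τ ^ 2..t ^ 2, exp (c * t ^ 2) * (√z)⁻¹ :=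
          integral_mono_on hτt2 (hf (sq_nonneg τ) hτt2 ht2)
            (ContinuousOn.intervalIntegrable_of_Icc hτt2 (continuousOn_const.mul
              (continuous_sqrt.continuousOn.inv₀ fun z hz =>
                (sqrt_pos.2 ((pow_pos hτ0 2).trans_le hz.1)).ne')))
            fun z hz => calc
              hsHalfIntegrand τ c z ≤ exp (c * z) / √z :=
                hsHalfIntegrand_le_exp_div_sqrt ((sq_nonneg τ).trans hz.1) (hz.2.trans ht2)
              _ ≤ exp (c * t ^ 2) * (√z)⁻¹ := by
                rw [div_eq_mul_inv]; gcongr; exact hz.2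
      _ = 2 * exp (c * t ^ 2) * (t - τ) := by
          rw [intervalIntegral.integral_const_mul, integral_inv_sqrt_sq_sq hτ0.le ht0.le]; ring
  · calc ∫ z in t ^ 2..1, hsHalfIntegrand τ c z ≤ ∫ z in t ^ 2..1, exp (c * z) / t :=
          integral_mono_on ht2 (hf (sq_nonneg t) ht2 le_rfl)
            (Continuous.intervalIntegrable (by fun_prop) _ _)
            fun z hz => calc
              hsHalfIntegrand τ c z ≤ exp (c * z) / √z :=
                hsHalfIntegrand_le_exp_div_sqrt ((sq_nonneg t).trans hz.1) hz.2
              _ ≤ exp (c * z) / t := by gcongr; exact (le_sqrt' ht0).2 hz.1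
      _ = (exp c - exp (c * t ^ 2)) / (c * t) := by
          rw [intervalIntegral.integral_div, integral_exp_mul hc.ne', mul_one, div_div]

end Integral

/-- Lemma A.1, bounds (A.2) and (A.3): lower and upper bounds on `I_{1/2}`. -/
theorem hsI_one_half_bounds (σ : ℝ) (hσ : 0 < σ) :
    (∀ τ : ℝ, τ ∈ Set.Ioo (0:ℝ) 1 → ∀ y : ℝ, y ≠ 0 →
      τ / 3 + σ ^ 2 / y ^ 2 *
          (Real.exp (y ^ 2 / (2 * σ ^ 2)) - Real.exp (τ ^ 2 * y ^ 2 / (2 * σ ^ 2))) ≤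
        hsI σ τ (1/2) y) ∧
    (∀ a : ℝ, 1 < a → ∀ τ : ℝ, 0 < τ → τ < 1 / Real.sqrt a → ∀ y : ℝ, y ≠ 0 →
      hsI σ τ (1/2) y ≤
        2 / 3 * Real.exp (τ ^ 2 * y ^ 2 / (2 * σ ^ 2)) * τ +
          2 * Real.exp (y ^ 2 / (2 * a * σ ^ 2)) * (1 / Real.sqrt a - τ) +
          2 * Real.sqrt a * σ ^ 2 / y ^ 2 *
            (Real.exp (y ^ 2 / (2 * σ ^ 2)) - Real.exp (y ^ 2 / (2 * a * σ ^ 2)))) := by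
  refine ⟨fun τ hτ y hy => ?_, fun a ha τ hτ0 hτa y hy => ?_⟩
  all_goals
    have hc : 0 < y ^ 2 / (2 * σ ^ 2) := by positivity
    have hcτ : y ^ 2 / (2 * σ ^ 2) * τ ^ 2 = τ ^ 2 * y ^ 2 / (2 * σ ^ 2) := by ring
    rw [hsI_one_half_eq_integral, ← hcτ]
  · convert integral_hsHalfIntegrand_ge hτ.1 hτ.2.le hc using 2
    field_simp
  · have hsa : 0 < √a := sqrt_pos.2 (by linarith)
    have hct : y ^ 2 / (2 * σ ^ 2) * (1 / √a) ^ 2 = y ^ 2 / (2 * a * σ ^ 2) := by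
      rw [div_pow, sq_sqrt (by linarith)]; field_simp
    rw [← hct]
    convert integral_hsHalfIntegrand_le hτ0 hτa.le ((div_le_one hsa).2 (one_le_sqrt.2 ha.le)) hc
      using 2
    field_simp
end

section
/- Let σ > 0, a > 1 and τ ∈ (0, 1/a). Then for every y ≠ 0: (i) I_{−1/2}(y) ≥ 1/τ + exp(τ² y²/(2σ²)) (1/τ − 1/√τ) + (a√a σ²/y²) ( exp(y²/(2aσ²)) − exp(τ y²/(2σ²)) ) + (σ²/y²) ( exp(y²/(2σ²)) − exp(y²/(2aσ²)) ); and (ii) I_{−1/2}(y) ≤ 2 exp(τ² y²/(2σ²))/τ + 2 exp(τ y²/(2σ²)) (1/τ − 1/√τ) + 2 exp(y²/(2aσ²)) (1/√τ − √a) + (2a√a σ²/y²) ( exp(y²/(2σ²)) − exp(y²/(2aσ²)) ). -/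
open MeasureTheory ProbabilityTheory Real Filter Set

set_option maxHeartbeats 2000000 in
/-- Lemma A.1, bounds (A.4) and (A.5): lower and upper bounds on `I_{−1/2}`. -/
theorem hsI_neg_one_half_bounds (σ a τ : ℝ) (hσ : 0 < σ) (ha : 1 < a)
    (hτ : 0 < τ) (hτa : τ < 1 / a) :
    ∀ y : ℝ, y ≠ 0 →
      (1 / τ + Real.exp (τ ^ 2 * y ^ 2 / (2 * σ ^ 2)) * (1 / τ - 1 / Real.sqrt τ) +
          a * Real.sqrt a * σ ^ 2 / y ^ 2 *
            (Real.exp (y ^ 2 / (2 * a * σ ^ 2)) - Real.exp (τ * y ^ 2 / (2 * σ ^ 2))) +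
          σ ^ 2 / y ^ 2 *
            (Real.exp (y ^ 2 / (2 * σ ^ 2)) - Real.exp (y ^ 2 / (2 * a * σ ^ 2))) ≤
        hsI σ τ (-(1/2)) y) ∧
      hsI σ τ (-(1/2)) y ≤
        2 * Real.exp (τ ^ 2 * y ^ 2 / (2 * σ ^ 2)) / τ +
          2 * Real.exp (τ * y ^ 2 / (2 * σ ^ 2)) * (1 / τ - 1 / Real.sqrt τ) +
          2 * Real.exp (y ^ 2 / (2 * a * σ ^ 2)) * (1 / Real.sqrt τ - Real.sqrt a) +
          2 * a * Real.sqrt a * σ ^ 2 / y ^ 2 *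
            (Real.exp (y ^ 2 / (2 * σ ^ 2)) - Real.exp (y ^ 2 / (2 * a * σ ^ 2))) := by
  intro y hy
  have ha0 : (0:ℝ) < a := lt_trans one_pos ha
  have hia1 : 1 / a < 1 := by rw [div_lt_one ha0]; exact ha
  have hia0 : (0:ℝ) < 1 / a := by positivity
  have hτ1 : τ < 1 := hτa.trans hia1
  have hτsq1 : τ ^ 2 < 1 := by nlinarith
  have hτ2 : τ ^ 2 < τ := by nlinarith
  have hτ20 : (0:ℝ) < τ ^ 2 := by positivity
  have hτ21 : τ ^ 2 ≤ (1:ℝ) := hτsq1.le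
  have hy2 : (0:ℝ) < y ^ 2 := by positivity
  obtain ⟨c, hc⟩ : ∃ c : ℝ, c = y ^ 2 / (2 * σ ^ 2) := ⟨_, rfl⟩
  have hc0 : 0 < c := by rw [hc]; positivity
  set f : ℝ → ℝ :=
    fun z => z ^ (-(1/2) : ℝ) * (τ ^ 2 + (1 - τ ^ 2) * z)⁻¹ * Real.exp (c * z) with hf
  have hIeq : hsI σ τ (-(1/2)) y = ∫ z in (0:ℝ)..1, f z := by
    unfold hsI
    refine intervalIntegral.integral_congr fun z _ => ?_
    rw [hf]
    have : y ^ 2 * z / (2 * σ ^ 2) = c * z := by rw [hc]; ring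
    rw [this]
  have hfm : Measurable f := by rw [hf]; fun_prop
  -- rpow facts
  have hsq : ((τ:ℝ)^2) ^ ((1/2):ℝ) = τ := by
    rw [← Real.sqrt_eq_rpow, Real.sqrt_sq hτ.le]
  have h1 : ((τ:ℝ)^2) ^ (-(1/2):ℝ) = τ⁻¹ := by
    rw [Real.rpow_neg (by positivity), hsq]
  have h2 : (τ:ℝ) ^ (-(1/2):ℝ) = (Real.sqrt τ)⁻¹ := by
    rw [Real.rpow_neg hτ.le, ← Real.sqrt_eq_rpow]
  have h3 : ((1/a:ℝ)) ^ (-(1/2):ℝ) = Real.sqrt a := by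
    rw [one_div, ← Real.rpow_neg_one a, ← Real.rpow_mul ha0.le,
      show ((-1:ℝ) * -(1/2)) = (1/2:ℝ) by norm_num, ← Real.sqrt_eq_rpow]
  have hz32 : ∀ z : ℝ, 0 < z → z ^ (-(1/2):ℝ) * z⁻¹ = z ^ (-(3/2):ℝ) := by
    intro z hz; rw [← Real.rpow_neg_one z, ← Real.rpow_add hz]; norm_num
  have hDpos : ∀ z : ℝ, 0 ≤ z → 0 < τ^2 + (1-τ^2)*z := by intro z hz; nlinarith
  have hfpos : ∀ z : ℝ, 0 ≤ z → 0 ≤ f z := by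
    intro z hz
    rw [hf]
    exact mul_nonneg (mul_nonneg (Real.rpow_nonneg hz _)
      (inv_nonneg.mpr (hDpos z hz).le)) (Real.exp_pos _).le
  -- integrability
  have hInt : ∀ s t : ℝ, 0 ≤ s → s ≤ 1 → 0 ≤ t → t ≤ 1 → IntervalIntegrable f volume s t := by
    intro s t hs0 hs1 ht0 ht1
    refine IntervalIntegrable.mono_fun'
      ((intervalIntegral.intervalIntegrable_rpow' (r := -(1/2)) (by norm_num)).mul_const ((τ^2)⁻¹ * Real.exp c))
      hfm.aestronglyMeasurable.restrict ?_
    filter_upwards [ae_restrict_mem measurableSet_uIoc] with z hz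
    have hz0 : 0 < z := lt_of_le_of_lt (le_min hs0 ht0) hz.1
    have hz1 : z ≤ 1 := le_trans hz.2 (max_le hs1 ht1)
    have key : f z ≤ z ^ (-(1/2):ℝ) * ((τ^2)⁻¹ * Real.exp c) := by
      simp only [hf]
      calc z ^ (-(1/2):ℝ) * (τ ^ 2 + (1 - τ ^ 2) * z)⁻¹ * Real.exp (c*z)
          = z ^ (-(1/2):ℝ) * ((τ ^ 2 + (1 - τ ^ 2) * z)⁻¹ * Real.exp (c*z)) := by ring
        _ ≤ z ^ (-(1/2):ℝ) * ((τ^2)⁻¹ * Real.exp c) :=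
            mul_le_mul_of_nonneg_left
              (mul_le_mul (inv_anti₀ hτ20 (by nlinarith))
                (Real.exp_le_exp.mpr (by nlinarith)) (Real.exp_pos _).le (by positivity))
              (Real.rpow_nonneg hz0.le _)
    calc ‖f z‖ = f z := by rw [Real.norm_eq_abs, abs_of_nonneg (hfpos z hz0.le)]
      _ ≤ _ := key
  -- splitting
  have hsplit : (∫ z in (0:ℝ)..1, f z) =
      (∫ z in (0:ℝ)..(τ^2), f z) + (∫ z in (τ^2)..τ, f z) + (∫ z in τ..(1/a), f z)
        + ∫ z in (1/a)..1, f z := by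
    have e3 := intervalIntegral.integral_add_adjacent_intervals
      (hInt τ (1/a) hτ.le hτ1.le hia0.le hia1.le) (hInt (1/a) 1 hia0.le hia1.le zero_le_one le_rfl)
    have e2 := intervalIntegral.integral_add_adjacent_intervals
      (hInt (τ^2) τ hτ20.le hτ21 hτ.le hτ1.le) (hInt τ 1 hτ.le hτ1.le zero_le_one le_rfl)
    have e1 := intervalIntegral.integral_add_adjacent_intervals
      (hInt 0 (τ^2) le_rfl zero_le_one hτ20.le hτ21) (hInt (τ^2) 1 hτ20.le hτ21 zero_le_one le_rfl)
    linarith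
  -- exp argument conversions
  have eA : Real.exp (c * τ^2) = Real.exp (τ ^ 2 * y ^ 2 / (2 * σ ^ 2)) := by
    congr 1; rw [hc]; ring
  have eB : Real.exp (c * τ) = Real.exp (τ * y ^ 2 / (2 * σ ^ 2)) := by
    congr 1; rw [hc]; ring
  have eC : Real.exp (c * (1/a)) = Real.exp (y ^ 2 / (2 * a * σ ^ 2)) := by
    congr 1; rw [hc]; field_simp
  have eD : Real.exp (c * 1) = Real.exp (y ^ 2 / (2 * σ ^ 2)) := by
    congr 1; rw [hc]; ring
  -- basic integral values
  have hExpInt : ∀ s t : ℝ,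
      (∫ z in s..t, Real.exp (c*z)) = (Real.exp (c*t) - Real.exp (c*s))/c := by
    intro s t
    rw [intervalIntegral.integral_comp_mul_left Real.exp hc0.ne', integral_exp, smul_eq_mul]
    ring
  have hr12 : ∀ s t : ℝ, (∫ z in s..t, z ^ (-(1/2):ℝ))
      = 2 * (t ^ ((1/2):ℝ) - s ^ ((1/2):ℝ)) := by
    intro s t
    rw [integral_rpow (Or.inl (by norm_num))]
    norm_num
    ring
  have hr32 : ∀ s t : ℝ, 0 < s → 0 < t → (∫ z in s..t, z ^ (-(3/2):ℝ))
      = 2 * (s ^ (-(1/2):ℝ) - t ^ (-(1/2):ℝ)) := by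
    intro s t hs ht
    rw [integral_rpow (Or.inr ⟨by norm_num, notMem_uIcc_of_lt hs ht⟩)]
    norm_num
    ring
  -- lower bound pieces
  have L1 : 1/τ ≤ ∫ z in (0:ℝ)..(τ^2), f z := by
    have key : (∫ z in (0:ℝ)..(τ^2), z ^ (-(1/2):ℝ) * (2*τ^2)⁻¹) ≤ ∫ z in (0:ℝ)..(τ^2), f z := by
      refine intervalIntegral.integral_mono_on hτ20.le
        ((intervalIntegral.intervalIntegrable_rpow' (r := -(1/2)) (by norm_num)).mul_const _)
        (hInt 0 (τ^2) le_rfl zero_le_one hτ20.le hτ21) ?_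
      intro z hz
      rcases eq_or_lt_of_le hz.1 with h | hz0
      · simp [hf, ← h, Real.zero_rpow (show (-(1/2):ℝ) ≠ 0 by norm_num)]
      · have hb1 : (2*τ^2)⁻¹ ≤ (τ^2 + (1-τ^2)*z)⁻¹ :=
          inv_anti₀ (hDpos z hz0.le) (by nlinarith [hz.2])
        have hb2 : (1:ℝ) ≤ Real.exp (c*z) :=
          Real.one_le_exp (mul_nonneg hc0.le hz0.le)
        simp only [hf]
        calc z ^ (-(1/2):ℝ) * (2*τ^2)⁻¹
            = z ^ (-(1/2):ℝ) * (2*τ^2)⁻¹ * 1 := (mul_one _).symm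
          _ ≤ z ^ (-(1/2):ℝ) * (τ^2 + (1-τ^2)*z)⁻¹ * Real.exp (c * z) :=
              mul_le_mul (mul_le_mul_of_nonneg_left hb1 (Real.rpow_nonneg hz0.le _)) hb2
                zero_le_one
                (mul_nonneg (Real.rpow_nonneg hz0.le _) (inv_nonneg.mpr (hDpos z hz0.le).le))
    have val : (∫ z in (0:ℝ)..(τ^2), z ^ (-(1/2):ℝ) * (2*τ^2)⁻¹) = 1/τ := by
      rw [intervalIntegral.integral_mul_const, hr12, hsq, Real.zero_rpow (by norm_num)]
      field_simp
      ring
    linarith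
  have L2 : Real.exp (τ^2*y^2/(2*σ^2)) * (1/τ - 1/Real.sqrt τ) ≤ ∫ z in (τ^2)..τ, f z := by
    have key : (∫ z in (τ^2)..τ, Real.exp (c*τ^2) * 2⁻¹ * z ^ (-(3/2):ℝ))
        ≤ ∫ z in (τ^2)..τ, f z := by
      refine intervalIntegral.integral_mono_on hτ2.le
        ((intervalIntegral.intervalIntegrable_rpow
          (Or.inr (notMem_uIcc_of_lt hτ20 hτ))).const_mul _)
        (hInt (τ^2) τ hτ20.le hτ21 hτ.le hτ1.le) ?_
      intro z hz
      have hz0 : 0 < z := lt_of_lt_of_le hτ20 hz.1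
      have hb1 : (2*z)⁻¹ ≤ (τ^2 + (1-τ^2)*z)⁻¹ :=
        inv_anti₀ (hDpos z hz0.le) (by nlinarith [hz.1])
      have hb2 : Real.exp (c*τ^2) ≤ Real.exp (c*z) :=
        Real.exp_le_exp.mpr (mul_le_mul_of_nonneg_left hz.1 hc0.le)
      simp only [hf]
      calc Real.exp (c*τ^2) * 2⁻¹ * z ^ (-(3/2):ℝ)
          = z ^ (-(1/2):ℝ) * (2*z)⁻¹ * Real.exp (c*τ^2) := by
            rw [← hz32 z hz0, mul_inv]; ring
        _ ≤ z ^ (-(1/2):ℝ) * (τ^2 + (1-τ^2)*z)⁻¹ * Real.exp (c*z) :=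
            mul_le_mul (mul_le_mul_of_nonneg_left hb1 (Real.rpow_nonneg hz0.le _)) hb2
              (Real.exp_pos _).le
              (mul_nonneg (Real.rpow_nonneg hz0.le _) (inv_nonneg.mpr (hDpos z hz0.le).le))
    have val : (∫ z in (τ^2)..τ, Real.exp (c*τ^2) * 2⁻¹ * z ^ (-(3/2):ℝ))
        = Real.exp (τ^2*y^2/(2*σ^2)) * (1/τ - 1/Real.sqrt τ) := by
      rw [intervalIntegral.integral_const_mul, hr32 _ _ hτ20 hτ, h1, h2, eA]
      ring
    linarith
  have L3 : a * Real.sqrt a * σ^2 / y^2 *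
      (Real.exp (y^2/(2*a*σ^2)) - Real.exp (τ*y^2/(2*σ^2))) ≤ ∫ z in τ..(1/a), f z := by
    have key : (∫ z in τ..(1/a), Real.sqrt a * (a/2) * Real.exp (c*z))
        ≤ ∫ z in τ..(1/a), f z := by
      refine intervalIntegral.integral_mono_on hτa.le
        (Continuous.intervalIntegrable (by fun_prop) _ _)
        (hInt τ (1/a) hτ.le hτ1.le hia0.le hia1.le) ?_
      intro z hz
      have hz0 : 0 < z := lt_of_lt_of_le hτ hz.1
      have hb0 : Real.sqrt a ≤ z ^ (-(1/2):ℝ) := by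
        rw [← h3]; exact Real.rpow_le_rpow_of_nonpos hz0 hz.2 (by norm_num)
      have hb1 : a/2 ≤ (τ^2 + (1-τ^2)*z)⁻¹ := by
        have hD : τ^2 + (1-τ^2)*z ≤ 2*(1/a) := by
          nlinarith [hz.1, hz.2, hτ2, mul_nonneg hτ20.le hz0.le]
        have h6 := inv_anti₀ (hDpos z hz0.le) hD
        have h7 : ((2:ℝ)*(1/a))⁻¹ = a/2 := by
          rw [one_div, mul_inv, inv_inv]; ring
        rwa [h7] at h6
      simp only [hf]
      exact mul_le_mul (mul_le_mul hb0 hb1 (by positivity) (Real.rpow_nonneg hz0.le _))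
        le_rfl (Real.exp_pos _).le
        (mul_nonneg (Real.rpow_nonneg hz0.le _) (inv_nonneg.mpr (hDpos z hz0.le).le))
    have val : (∫ z in τ..(1/a), Real.sqrt a * (a/2) * Real.exp (c*z))
        = a * Real.sqrt a * σ^2 / y^2 *
          (Real.exp (y^2/(2*a*σ^2)) - Real.exp (τ*y^2/(2*σ^2))) := by
      rw [intervalIntegral.integral_const_mul, hExpInt, eC, eB, hc]
      field_simp
    linarith
  have L4 : σ^2/y^2 * (Real.exp (y^2/(2*σ^2)) - Real.exp (y^2/(2*a*σ^2)))
      ≤ ∫ z in (1/a)..1, f z := by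
    have key : (∫ z in (1/a)..1, (2:ℝ)⁻¹ * Real.exp (c*z)) ≤ ∫ z in (1/a)..1, f z := by
      refine intervalIntegral.integral_mono_on hia1.le
        (Continuous.intervalIntegrable (by fun_prop) _ _)
        (hInt (1/a) 1 hia0.le hia1.le zero_le_one le_rfl) ?_
      intro z hz
      have hz0 : 0 < z := lt_of_lt_of_le hia0 hz.1
      have hb0 : (1:ℝ) ≤ z ^ (-(1/2):ℝ) := by
        have h7 := Real.rpow_le_rpow_of_nonpos hz0 hz.2 (show (-(1/2):ℝ) ≤ 0 by norm_num)
        rwa [Real.one_rpow] at h7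
      have hb1 : (2:ℝ)⁻¹ ≤ (τ^2 + (1-τ^2)*z)⁻¹ :=
        inv_anti₀ (hDpos z hz0.le) (by nlinarith [hz.2, hz0.le, hτsq1])
      simp only [hf]
      refine mul_le_mul_of_nonneg_right ?_ (Real.exp_pos _).le
      calc (2:ℝ)⁻¹ = 1 * (2:ℝ)⁻¹ := (one_mul _).symm
        _ ≤ z ^ (-(1/2):ℝ) * (τ^2 + (1-τ^2)*z)⁻¹ :=
            mul_le_mul hb0 hb1 (by norm_num) (Real.rpow_nonneg hz0.le _)
    have val : (∫ z in (1/a)..1, (2:ℝ)⁻¹ * Real.exp (c*z))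
        = σ^2/y^2 * (Real.exp (y^2/(2*σ^2)) - Real.exp (y^2/(2*a*σ^2))) := by
      rw [intervalIntegral.integral_const_mul, hExpInt, eC, eD, hc]
      field_simp
    linarith
  -- upper bound pieces
  have U1 : (∫ z in (0:ℝ)..(τ^2), f z) ≤ 2 * Real.exp (τ^2*y^2/(2*σ^2)) / τ := by
    have key : (∫ z in (0:ℝ)..(τ^2), f z)
        ≤ ∫ z in (0:ℝ)..(τ^2), z ^ (-(1/2):ℝ) * ((τ^2)⁻¹ * Real.exp (c*τ^2)) := by
      refine intervalIntegral.integral_mono_on hτ20.le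
        (hInt 0 (τ^2) le_rfl zero_le_one hτ20.le hτ21)
        ((intervalIntegral.intervalIntegrable_rpow' (r := -(1/2)) (by norm_num)).mul_const _) ?_
      intro z hz
      rcases eq_or_lt_of_le hz.1 with h | hz0
      · simp [hf, ← h, Real.zero_rpow (show (-(1/2):ℝ) ≠ 0 by norm_num)]
      · have hb1 : (τ^2 + (1-τ^2)*z)⁻¹ ≤ (τ^2)⁻¹ :=
          inv_anti₀ hτ20 (by nlinarith)
        have hb2 : Real.exp (c*z) ≤ Real.exp (c*τ^2) :=
          Real.exp_le_exp.mpr (mul_le_mul_of_nonneg_left hz.2 hc0.le)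
        simp only [hf]
        calc z ^ (-(1/2):ℝ) * (τ^2 + (1-τ^2)*z)⁻¹ * Real.exp (c*z)
            = z ^ (-(1/2):ℝ) * ((τ^2 + (1-τ^2)*z)⁻¹ * Real.exp (c*z)) := by ring
          _ ≤ z ^ (-(1/2):ℝ) * ((τ^2)⁻¹ * Real.exp (c*τ^2)) :=
              mul_le_mul_of_nonneg_left
                (mul_le_mul hb1 hb2 (Real.exp_pos _).le (inv_nonneg.mpr hτ20.le))
                (Real.rpow_nonneg hz0.le _)
    have val : (∫ z in (0:ℝ)..(τ^2), z ^ (-(1/2):ℝ) * ((τ^2)⁻¹ * Real.exp (c*τ^2)))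
        = 2 * Real.exp (τ^2*y^2/(2*σ^2)) / τ := by
      rw [intervalIntegral.integral_mul_const, hr12, hsq, Real.zero_rpow (by norm_num), eA]
      field_simp
      ring
    linarith
  have U2 : (∫ z in (τ^2)..τ, f z) ≤ 2 * Real.exp (τ*y^2/(2*σ^2)) * (1/τ - 1/Real.sqrt τ) := by
    have key : (∫ z in (τ^2)..τ, f z)
        ≤ ∫ z in (τ^2)..τ, Real.exp (c*τ) * z ^ (-(3/2):ℝ) := by
      refine intervalIntegral.integral_mono_on hτ2.le
        (hInt (τ^2) τ hτ20.le hτ21 hτ.le hτ1.le)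
        ((intervalIntegral.intervalIntegrable_rpow
          (Or.inr (notMem_uIcc_of_lt hτ20 hτ))).const_mul _) ?_
      intro z hz
      have hz0 : 0 < z := lt_of_lt_of_le hτ20 hz.1
      have hz1 : z ≤ 1 := le_trans hz.2 hτ1.le
      have hb1 : (τ^2 + (1-τ^2)*z)⁻¹ ≤ z⁻¹ :=
        inv_anti₀ hz0 (by nlinarith)
      have hb2 : Real.exp (c*z) ≤ Real.exp (c*τ) :=
        Real.exp_le_exp.mpr (mul_le_mul_of_nonneg_left hz.2 hc0.le)
      simp only [hf]
      calc z ^ (-(1/2):ℝ) * (τ^2 + (1-τ^2)*z)⁻¹ * Real.exp (c*z)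
          ≤ z ^ (-(1/2):ℝ) * z⁻¹ * Real.exp (c*τ) :=
            mul_le_mul (mul_le_mul_of_nonneg_left hb1 (Real.rpow_nonneg hz0.le _)) hb2
              (Real.exp_pos _).le
              (mul_nonneg (Real.rpow_nonneg hz0.le _) (inv_nonneg.mpr hz0.le))
        _ = Real.exp (c*τ) * z ^ (-(3/2):ℝ) := by rw [hz32 z hz0]; ring
    have val : (∫ z in (τ^2)..τ, Real.exp (c*τ) * z ^ (-(3/2):ℝ))
        = 2 * Real.exp (τ*y^2/(2*σ^2)) * (1/τ - 1/Real.sqrt τ) := by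
      rw [intervalIntegral.integral_const_mul, hr32 _ _ hτ20 hτ, h1, h2, eB]
      ring
    linarith
  have U3 : (∫ z in τ..(1/a), f z)
      ≤ 2 * Real.exp (y^2/(2*a*σ^2)) * (1/Real.sqrt τ - Real.sqrt a) := by
    have key : (∫ z in τ..(1/a), f z)
        ≤ ∫ z in τ..(1/a), Real.exp (c*(1/a)) * z ^ (-(3/2):ℝ) := by
      refine intervalIntegral.integral_mono_on hτa.le
        (hInt τ (1/a) hτ.le hτ1.le hia0.le hia1.le)
        ((intervalIntegral.intervalIntegrable_rpow
          (Or.inr (notMem_uIcc_of_lt hτ hia0))).const_mul _) ?_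
      intro z hz
      have hz0 : 0 < z := lt_of_lt_of_le hτ hz.1
      have hz1 : z ≤ 1 := le_trans hz.2 hia1.le
      have hb1 : (τ^2 + (1-τ^2)*z)⁻¹ ≤ z⁻¹ :=
        inv_anti₀ hz0 (by nlinarith)
      have hb2 : Real.exp (c*z) ≤ Real.exp (c*(1/a)) :=
        Real.exp_le_exp.mpr (mul_le_mul_of_nonneg_left hz.2 hc0.le)
      simp only [hf]
      calc z ^ (-(1/2):ℝ) * (τ^2 + (1-τ^2)*z)⁻¹ * Real.exp (c*z)
          ≤ z ^ (-(1/2):ℝ) * z⁻¹ * Real.exp (c*(1/a)) :=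
            mul_le_mul (mul_le_mul_of_nonneg_left hb1 (Real.rpow_nonneg hz0.le _)) hb2
              (Real.exp_pos _).le
              (mul_nonneg (Real.rpow_nonneg hz0.le _) (inv_nonneg.mpr hz0.le))
        _ = Real.exp (c*(1/a)) * z ^ (-(3/2):ℝ) := by rw [hz32 z hz0]; ring
    have val : (∫ z in τ..(1/a), Real.exp (c*(1/a)) * z ^ (-(3/2):ℝ))
        = 2 * Real.exp (y^2/(2*a*σ^2)) * (1/Real.sqrt τ - Real.sqrt a) := by
      rw [intervalIntegral.integral_const_mul, hr32 _ _ hτ hia0, h2, h3, eC]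
      ring
    linarith
  have U4 : (∫ z in (1/a)..1, f z) ≤ 2*a*Real.sqrt a*σ^2/y^2 *
      (Real.exp (y^2/(2*σ^2)) - Real.exp (y^2/(2*a*σ^2))) := by
    have key : (∫ z in (1/a)..1, f z)
        ≤ ∫ z in (1/a)..1, a * Real.sqrt a * Real.exp (c*z) := by
      refine intervalIntegral.integral_mono_on hia1.le
        (hInt (1/a) 1 hia0.le hia1.le zero_le_one le_rfl)
        (Continuous.intervalIntegrable (by fun_prop) _ _) ?_
      intro z hz
      have hz0 : 0 < z := lt_of_lt_of_le hia0 hz.1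
      have hb0 : z ^ (-(1/2):ℝ) ≤ Real.sqrt a := by
        rw [← h3]; exact Real.rpow_le_rpow_of_nonpos hia0 hz.1 (by norm_num)
      have hb1 : (τ^2 + (1-τ^2)*z)⁻¹ ≤ a := by
        have h4 : (τ^2 + (1-τ^2)*z)⁻¹ ≤ z⁻¹ := inv_anti₀ hz0 (by nlinarith [hz.2])
        have h5 : z⁻¹ ≤ (1/a)⁻¹ := inv_anti₀ hia0 hz.1
        rw [one_div, inv_inv] at h5
        linarith
      simp only [hf]
      refine mul_le_mul_of_nonneg_right ?_ (Real.exp_pos _).le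
      calc z ^ (-(1/2):ℝ) * (τ^2 + (1-τ^2)*z)⁻¹ ≤ Real.sqrt a * a :=
          mul_le_mul hb0 hb1 (inv_nonneg.mpr (hDpos z hz0.le).le) (Real.sqrt_nonneg a)
        _ = a * Real.sqrt a := mul_comm _ _
    have val : (∫ z in (1/a)..1, a * Real.sqrt a * Real.exp (c*z))
        = 2*a*Real.sqrt a*σ^2/y^2 *
          (Real.exp (y^2/(2*σ^2)) - Real.exp (y^2/(2*a*σ^2))) := by
      rw [intervalIntegral.integral_const_mul, hExpInt, eC, eD, hc]
      field_simp
    linarith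
  rw [hIeq, hsplit]
  constructor
  · linarith
  · linarith
end

section
/- Let σ > 0 and τ ∈ (0,1), and define f(τ) = (τ/(1−τ²)) ( √(1−τ²)/arctan(√(1−τ²)/τ) − τ ). Then for every y > 0: T_τ(y) ≤ y · exp(y²/(2σ²)) · f(τ), and moreover f(τ) < (2/3) · τ/(1+τ) ≤ (2/3) τ, so in particular T_τ(y) ≤ (2/3) τ y exp(y²/(2σ²)). -/
open MeasureTheory ProbabilityTheory Real Filter Set

/-!
The weight `exp (y² z / (2σ²))` lies between `1` and `exp (y² / (2σ²))` for `z ∈ [0, 1]`, so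
`T_τ(y) ≤ y exp (y² / (2σ²)) I_{1/2}(0) / I_{-1/2}(0)`. At `y = 0` both integrals are elementary:
with `s = √(1 - τ²)`, the antiderivative `arctan (s √z / τ)` gives `I_{-1/2}(0) = 2 arctan (s/τ) / (τ s)`,
and writing `z = (D - τ²) / (1 - τ²)` for the denominator `D` gives
`(1 - τ²) I_{1/2}(0) = 2 - τ² I_{-1/2}(0)`; the ratio is `f(τ)`. As `arctan (s/τ) = arccos τ`, the bound
`f(τ) < (2/3) τ / (1 + τ)` is the Cusa–Huygens inequality `sin θ / θ < (2 + cos θ) / 3` at `θ = arccos τ`.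
-/

lemma pos_of_hasDerivAt_of_deriv_pos {f f' : ℝ → ℝ} {a x : ℝ} (hf : ∀ t, HasDerivAt f (f' t) t)
    (hf0 : f 0 = 0) (hf' : ∀ t ∈ Ioo 0 a, 0 < f' t) (hx : x ∈ Ioc 0 a) : 0 < f x := by
  have hmono : StrictMonoOn f (Icc 0 a) :=
    strictMonoOn_of_deriv_pos (convex_Icc 0 a) (fun t _ => (hf t).continuousAt.continuousWithinAt)
      (fun t ht => by rw [(hf t).deriv]; exact hf' t (by simpa using ht))
  simpa [hf0] using hmono (left_mem_Icc.2 (hx.1.le.trans hx.2)) (Ioc_subset_Icc_self hx) hx.1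

/-- The Cusa–Huygens inequality. -/
theorem three_mul_sin_lt_mul_two_add_cos {θ : ℝ} (hθ : 0 < θ) : 3 * sin θ < θ * (2 + cos θ) := by
  rcases le_or_gt θ π with hπ | hπ
  · have h₃ : ∀ t ∈ Ioc 0 π, 0 < sin t - t * cos t :=
      fun t => pos_of_hasDerivAt_of_deriv_pos (f' := fun t => t * sin t)
        (fun t => ((hasDerivAt_sin t).sub ((hasDerivAt_id t).mul (hasDerivAt_cos t))).congr_deriv
          (by simp only [id_eq]; ring))
        (by simp) (fun t ht => mul_pos ht.1 (sin_pos_of_pos_of_lt_pi ht.1 ht.2))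
    have h₂ : ∀ t ∈ Ioc 0 π, 0 < 2 - 2 * cos t - t * sin t :=
      fun t => pos_of_hasDerivAt_of_deriv_pos
        (fun t => (((hasDerivAt_const t 2).sub ((hasDerivAt_cos t).const_mul 2)).sub
          ((hasDerivAt_id t).mul (hasDerivAt_sin t))).congr_deriv (by simp only [id_eq]; ring))
        (by simp) (fun t ht => h₃ t (Ioo_subset_Ioc_self ht))
    have h₁ : 0 < θ * (2 + cos θ) - 3 * sin θ :=
      pos_of_hasDerivAt_of_deriv_pos (f := fun t => t * (2 + cos t) - 3 * sin t)
        (fun t => (((hasDerivAt_id t).mul ((hasDerivAt_const t 2).add (hasDerivAt_cos t))).sub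
          ((hasDerivAt_sin t).const_mul 3)).congr_deriv (by simp only [id_eq, Pi.add_apply]; ring))
        (by simp) (fun t ht => h₂ t (Ioo_subset_Ioc_self ht)) ⟨hθ, hπ⟩
    linarith
  · nlinarith [sin_le_one θ, neg_one_le_cos θ, pi_gt_three]

/-- The function `f(τ)` of the paper. -/
noncomputable def hsF (τ : ℝ) : ℝ :=
  τ / (1 - τ ^ 2) * (√(1 - τ ^ 2) / arctan (√(1 - τ ^ 2) / τ) - τ)

section Integrals

variable {σ τ k y : ℝ}

lemma hsDenom_pos (hτ : τ ≠ 0) {z : ℝ} (hz : z ∈ Icc (0 : ℝ) 1) : 0 < τ ^ 2 + (1 - τ ^ 2) * z := by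
  rcases hz.1.eq_or_lt with rfl | hz₀
  · simp only [mul_zero, add_zero]
    positivity
  · nlinarith [mul_nonneg (sq_nonneg τ) (sub_nonneg.2 hz.2)]

lemma intervalIntegrable_hsI (hτ : τ ≠ 0) (hk : -1 < k) :
    IntervalIntegrable
      (fun z => z ^ k * (τ ^ 2 + (1 - τ ^ 2) * z)⁻¹ * exp (y ^ 2 * z / (2 * σ ^ 2))) volume 0 1 := by
  refine ((intervalIntegral.intervalIntegrable_rpow' hk).mul_continuousOn ?_).mul_continuousOn
    (by fun_prop)
  rw [uIcc_of_le zero_le_one]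
  exact (continuousOn_const.add (continuousOn_const.mul continuousOn_id)).inv₀
    fun z hz => (hsDenom_pos hτ hz).ne'

lemma hsI_integrand_nonneg (hτ : τ ≠ 0) {z : ℝ} (hz : z ∈ Icc (0 : ℝ) 1) :
    0 ≤ z ^ k * (τ ^ 2 + (1 - τ ^ 2) * z)⁻¹ :=
  mul_nonneg (rpow_nonneg hz.1 k) (inv_nonneg.2 (hsDenom_pos hτ hz).le)

lemma hsI_pos (hτ : τ ≠ 0) (hk : -1 < k) : 0 < hsI σ τ k y :=
  intervalIntegral.intervalIntegral_pos_of_pos_on (intervalIntegrable_hsI hτ hk)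
    (fun _ hz => mul_pos (mul_pos (rpow_pos_of_pos hz.1 k)
      (inv_pos.2 (hsDenom_pos hτ (Ioo_subset_Icc_self hz)))) (exp_pos _)) zero_lt_one

lemma hsI_zero_le (hτ : τ ≠ 0) (hk : -1 < k) : hsI σ τ k 0 ≤ hsI σ τ k y := by
  refine intervalIntegral.integral_mono_on zero_le_one (intervalIntegrable_hsI hτ hk)
    (intervalIntegrable_hsI hτ hk) fun z hz => ?_
  refine mul_le_mul_of_nonneg_left (exp_le_exp.2 ?_) (hsI_integrand_nonneg hτ hz)
  rw [zero_pow two_ne_zero, zero_mul, zero_div]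
  exact div_nonneg (mul_nonneg (sq_nonneg y) hz.1) (by positivity)

lemma hsI_le_exp_mul_hsI_zero (hτ : τ ≠ 0) (hk : -1 < k) :
    hsI σ τ k y ≤ exp (y ^ 2 / (2 * σ ^ 2)) * hsI σ τ k 0 := by
  rw [hsI, hsI, ← intervalIntegral.integral_const_mul]
  refine intervalIntegral.integral_mono_on zero_le_one (intervalIntegrable_hsI hτ hk)
    ((intervalIntegrable_hsI hτ hk).const_mul _) fun z hz => ?_
  have hexp : exp (y ^ 2 * z / (2 * σ ^ 2)) ≤ exp (y ^ 2 / (2 * σ ^ 2)) := by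
    rw [exp_le_exp, mul_comm, mul_div_assoc]
    exact mul_le_of_le_one_left (by positivity) hz.2
  simpa [mul_comm (exp _)] using mul_le_mul_of_nonneg_left hexp (hsI_integrand_nonneg hτ hz)

theorem hsT_le_mul_exp_mul_hsI_ratio (hτ : τ ≠ 0) (hy : 0 ≤ y) :
    hsT σ τ y ≤ y * exp (y ^ 2 / (2 * σ ^ 2)) * (hsI σ τ (1/2) 0 / hsI σ τ (-(1/2)) 0) := by
  have hk : (-1 : ℝ) < -(1/2) := by norm_num
  calc hsT σ τ y ≤ y * (exp (y ^ 2 / (2 * σ ^ 2)) * hsI σ τ (1/2) 0) / hsI σ τ (-(1/2)) 0 :=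
        div_le_div₀ (mul_nonneg hy (mul_nonneg (exp_pos _).le (hsI_pos hτ (by norm_num)).le))
          (mul_le_mul_of_nonneg_left (hsI_le_exp_mul_hsI_zero hτ (by norm_num)) hy)
          (hsI_pos hτ hk) (hsI_zero_le hτ hk)
    _ = _ := by ring

lemma hasDerivAt_arctan_mul_sqrt (c : ℝ) {x : ℝ} (hx : 0 < x) :
    HasDerivAt (fun z => arctan (c * √z)) (c / (2 * √x * (1 + c ^ 2 * x))) x := by
  convert ((hasDerivAt_sqrt hx.ne').const_mul c).arctan using 1
  rw [mul_pow, sq_sqrt hx.le]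
  field_simp

lemma hsI_neg_half_zero (hτ₀ : 0 < τ) (hτ₁ : τ < 1) :
    hsI σ τ (-(1/2)) 0 = 2 / (τ * √(1 - τ ^ 2)) * arctan (√(1 - τ ^ 2) / τ) := by
  set s := √(1 - τ ^ 2)
  have hs : 0 < s := sqrt_pos.2 (by nlinarith)
  have hs2 : s ^ 2 = 1 - τ ^ 2 := sq_sqrt (by nlinarith)
  rw [hsI, intervalIntegral.integral_eq_sub_of_hasDerivAt_of_le zero_le_one
    (f := fun z => 2 / (τ * s) * arctan (s / τ * √z)) (by fun_prop) ?_
    (intervalIntegrable_hsI hτ₀.ne' (by norm_num))]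
  · simp
  intro x hx
  refine ((hasDerivAt_arctan_mul_sqrt (s / τ) hx.1).const_mul _).congr_deriv ?_
  rw [rpow_neg hx.1.le, ← sqrt_eq_rpow, div_pow, hs2]
  have hsqrt : 0 < √x := sqrt_pos.2 hx.1
  have hD := hsDenom_pos hτ₀.ne' (Ioo_subset_Icc_self hx)
  field_simp
  simp

lemma one_sub_sq_mul_hsI_add_one (hτ : τ ≠ 0) (hk : -1 < k) :
    (1 - τ ^ 2) * hsI σ τ (k + 1) y =
      (∫ z in (0 : ℝ)..1, z ^ k * exp (y ^ 2 * z / (2 * σ ^ 2))) - τ ^ 2 * hsI σ τ k y := by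
  rw [hsI, hsI, ← intervalIntegral.integral_const_mul, ← intervalIntegral.integral_const_mul,
    ← intervalIntegral.integral_sub
      ((intervalIntegral.intervalIntegrable_rpow' hk).mul_continuousOn (by fun_prop))
      ((intervalIntegrable_hsI hτ hk).const_mul _)]
  refine intervalIntegral.integral_congr fun z hz => ?_
  rw [uIcc_of_le zero_le_one] at hz
  have hD := hsDenom_pos hτ hz
  rw [rpow_add_one' hz.1 (by linarith : 0 < k + 1).ne']
  field_simp
  ring

lemma hsI_half_zero_div_hsI_neg_half_zero (hτ₀ : 0 < τ) (hτ₁ : τ < 1) :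
    hsI σ τ (1/2) 0 / hsI σ τ (-(1/2)) 0 = hsF τ := by
  rw [div_eq_iff (hsI_pos hτ₀.ne' (by norm_num)).ne']
  have hrel := one_sub_sq_mul_hsI_add_one (σ := σ) (y := 0) (k := -(1/2)) hτ₀.ne' (by norm_num)
  rw [show -(1/2) + 1 = (1/2 : ℝ) by norm_num] at hrel
  have hint : ∫ z in (0 : ℝ)..1, z ^ (-(1/2) : ℝ) * exp (0 ^ 2 * z / (2 * σ ^ 2)) = 2 := by
    simp only [zero_pow two_ne_zero, zero_mul, zero_div, exp_zero, mul_one]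
    rw [integral_rpow (by norm_num)]
    norm_num
  rw [hint, hsI_neg_half_zero hτ₀ hτ₁] at hrel
  rw [hsI_neg_half_zero hτ₀ hτ₁, hsF]
  have hs : 0 < √(1 - τ ^ 2) := sqrt_pos.2 (by nlinarith)
  have hA : 0 < arctan (√(1 - τ ^ 2) / τ) := arctan_pos.2 (by positivity)
  have h1τ : 0 < 1 - τ ^ 2 := by nlinarith
  field_simp
  field_simp at hrel
  linear_combination hrel

end Integrals

lemma hsF_lt {τ : ℝ} (hτ₀ : 0 < τ) (hτ₁ : τ < 1) : hsF τ < 2 / 3 * (τ / (1 + τ)) := by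
  have hcusa := three_mul_sin_lt_mul_two_add_cos (arccos_pos.2 hτ₁)
  rw [sin_arccos, cos_arccos (by linarith) hτ₁.le, arccos_eq_arctan hτ₀] at hcusa
  have hA : 0 < arctan (√(1 - τ ^ 2) / τ) := arctan_pos.2 (div_pos (sqrt_pos.2 (by nlinarith)) hτ₀)
  have h1τ : 0 < 1 - τ ^ 2 := by nlinarith
  have hratio : √(1 - τ ^ 2) / arctan (√(1 - τ ^ 2) / τ) < (2 + τ) / 3 := by
    rw [div_lt_div_iff₀ hA three_pos]
    linarith
  calc hsF τ < τ / (1 - τ ^ 2) * ((2 + τ) / 3 - τ) := by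
        rw [hsF]
        gcongr
    _ = 2 / 3 * (τ / (1 + τ)) := by
        field_simp
        ring

theorem hsT_upper_bound_one_general (σ τ : ℝ) (hτ : τ ∈ Set.Ioo (0:ℝ) 1) :
    (∀ y : ℝ, 0 < y →
      hsT σ τ y ≤ y * Real.exp (y ^ 2 / (2 * σ ^ 2)) *
        (τ / (1 - τ ^ 2) *
          (Real.sqrt (1 - τ ^ 2) / Real.arctan (Real.sqrt (1 - τ ^ 2) / τ) - τ))) ∧
    (τ / (1 - τ ^ 2) *
        (Real.sqrt (1 - τ ^ 2) / Real.arctan (Real.sqrt (1 - τ ^ 2) / τ) - τ) <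
      2 / 3 * (τ / (1 + τ))) ∧
    (2 / 3 * (τ / (1 + τ)) ≤ 2 / 3 * τ) ∧
    (∀ y : ℝ, 0 < y →
      hsT σ τ y ≤ 2 / 3 * τ * y * Real.exp (y ^ 2 / (2 * σ ^ 2))) := by
  obtain ⟨hτ₀, hτ₁⟩ := hτ
  have hT : ∀ y : ℝ, 0 < y → hsT σ τ y ≤ y * exp (y ^ 2 / (2 * σ ^ 2)) * hsF τ := fun y hy => by
    simpa only [hsI_half_zero_div_hsI_neg_half_zero hτ₀ hτ₁] using
      hsT_le_mul_exp_mul_hsI_ratio (σ := σ) hτ₀.ne' hy.le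
  have hf : hsF τ < 2 / 3 * (τ / (1 + τ)) := hsF_lt hτ₀ hτ₁
  have hτ' : 2 / 3 * (τ / (1 + τ)) ≤ 2 / 3 * τ := by
    gcongr
    exact div_le_self hτ₀.le (by linarith)
  refine ⟨hT, hf, hτ', fun y hy => ?_⟩
  calc hsT σ τ y ≤ y * exp (y ^ 2 / (2 * σ ^ 2)) * hsF τ := hT y hy
    _ ≤ y * exp (y ^ 2 / (2 * σ ^ 2)) * (2 / 3 * τ) := by gcongr; linarith
    _ = 2 / 3 * τ * y * exp (y ^ 2 / (2 * σ ^ 2)) := by ring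

/-- Lemma A.2, part 1: `T_τ(y) ≤ y e^{y²/(2σ²)} f(τ)` with `f(τ) < (2/3)τ/(1+τ) ≤ (2/3)τ`. -/
theorem hsT_upper_bound_one (σ τ : ℝ) (hσ : 0 < σ) (hτ : τ ∈ Set.Ioo (0:ℝ) 1) :
    (∀ y : ℝ, 0 < y →
      hsT σ τ y ≤ y * Real.exp (y ^ 2 / (2 * σ ^ 2)) *
        (τ / (1 - τ ^ 2) *
          (Real.sqrt (1 - τ ^ 2) / Real.arctan (Real.sqrt (1 - τ ^ 2) / τ) - τ))) ∧
    (τ / (1 - τ ^ 2) *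
        (Real.sqrt (1 - τ ^ 2) / Real.arctan (Real.sqrt (1 - τ ^ 2) / τ) - τ) <
      2 / 3 * (τ / (1 + τ))) ∧
    (2 / 3 * (τ / (1 + τ)) ≤ 2 / 3 * τ) ∧
    (∀ y : ℝ, 0 < y →
      hsT σ τ y ≤ 2 / 3 * τ * y * Real.exp (y ^ 2 / (2 * σ ^ 2))) :=
  hsT_upper_bound_one_general σ τ hτ
end

section
/- Let σ > 0, a > 1 and τ ∈ (0, 1/a). Then for every y > 0: T_τ(y) ≤ y · N(y)/D(y), where N(y) = (2/3) exp(τ² y²/(2σ²)) τ + 2 exp(y²/(2aσ²)) (1/√a − τ) + (2√a σ²/y²) ( exp(y²/(2σ²)) − exp(y²/(2aσ²)) ) and D(y) = 1/τ + exp(τ² y²/(2σ²)) (1/τ − 1/√τ) + (a√a σ²/y²) ( exp(y²/(2aσ²)) − exp(τ y²/(2σ²)) ) + (σ²/y²) ( exp(y²/(2σ²)) − exp(y²/(2aσ²)) ). -/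
open MeasureTheory ProbabilityTheory Real Filter Set

namespace HSAux

/-- Integrability of the horseshoe integrand on subintervals of `[0,1]`. -/
lemma hs_integrable (σ τ y : ℝ) (hσ : 0 < σ) (hτ : 0 < τ) (hτ1 : τ < 1) (k : ℝ)
    (hk : -(1/2) ≤ k) {u v : ℝ} (hu : 0 ≤ u) (huv : u ≤ v) (hv : v ≤ 1) :
    IntervalIntegrable
      (fun z => z ^ k * (τ ^ 2 + (1 - τ ^ 2) * z)⁻¹ * Real.exp (y ^ 2 * z / (2 * σ ^ 2)))
      volume u v := by
  have hC : (0:ℝ) ≤ (τ ^ 2)⁻¹ * Real.exp (y ^ 2 / (2 * σ ^ 2)) := by positivity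
  apply IntervalIntegrable.mono_fun
    (f := fun z => ((τ ^ 2)⁻¹ * Real.exp (y ^ 2 / (2 * σ ^ 2))) * z ^ (-(1/2) : ℝ))
  · exact (intervalIntegral.intervalIntegrable_rpow' (by norm_num)).const_mul _
  · apply Measurable.aestronglyMeasurable
    fun_prop
  · rw [Filter.EventuallyLE, uIoc_of_le huv]
    filter_upwards [ae_restrict_mem measurableSet_Ioc] with z hz
    have hz0 : 0 < z := lt_of_le_of_lt hu hz.1
    have hz1 : z ≤ 1 := hz.2.trans hv
    have ht2 : (0:ℝ) ≤ (1 - τ ^ 2) * z := mul_nonneg (by nlinarith) hz0.le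
    have hden : (0:ℝ) < τ ^ 2 + (1 - τ ^ 2) * z := by nlinarith
    have h1 : z ^ k ≤ z ^ (-(1/2) : ℝ) := Real.rpow_le_rpow_of_exponent_ge hz0 hz1 hk
    have h2 : (τ ^ 2 + (1 - τ ^ 2) * z)⁻¹ ≤ (τ ^ 2)⁻¹ := by
      apply inv_anti₀ (by positivity); linarith
    have h3 : Real.exp (y ^ 2 * z / (2 * σ ^ 2)) ≤ Real.exp (y ^ 2 / (2 * σ ^ 2)) := by
      apply Real.exp_le_exp.2
      apply div_le_div_of_nonneg_right ?_ (by positivity)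
      nlinarith
    simp only [Real.norm_eq_abs]
    rw [abs_of_nonneg (by positivity), abs_of_nonneg (by positivity)]
    calc z ^ k * (τ ^ 2 + (1 - τ ^ 2) * z)⁻¹ * Real.exp (y ^ 2 * z / (2 * σ ^ 2))
        ≤ z ^ (-(1/2):ℝ) * (τ ^ 2)⁻¹ * Real.exp (y ^ 2 / (2 * σ ^ 2)) := by
          exact mul_le_mul (mul_le_mul h1 h2 (by positivity) (by positivity)) h3
            (Real.exp_pos _).le (by positivity)
      _ = (τ ^ 2)⁻¹ * Real.exp (y ^ 2 / (2 * σ ^ 2)) * z ^ (-(1/2) : ℝ) := by ring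

/-- The exponential model integral. -/
lemma hs_int_exp (σ y : ℝ) (hσ : 0 < σ) (hy : 0 < y) (u v : ℝ) :
    ∫ z in u..v, Real.exp (y ^ 2 * z / (2 * σ ^ 2))
      = 2 * σ ^ 2 / y ^ 2 *
        (Real.exp (y ^ 2 * v / (2 * σ ^ 2)) - Real.exp (y ^ 2 * u / (2 * σ ^ 2))) := by
  have hc : (y ^ 2 / (2 * σ ^ 2)) ≠ 0 := by positivity
  have h : ∀ z : ℝ, y ^ 2 * z / (2 * σ ^ 2) = z * (y ^ 2 / (2 * σ ^ 2)) := by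
    intro z; ring
  simp_rw [h]
  rw [intervalIntegral.integral_comp_mul_right (fun x => Real.exp x) hc,
    integral_exp, smul_eq_mul]
  field_simp


lemma hs_exp_mono (σ y : ℝ) (hσ : 0 < σ) {u v : ℝ} (huv : u ≤ v) :
    Real.exp (y ^ 2 * u / (2 * σ ^ 2)) ≤ Real.exp (y ^ 2 * v / (2 * σ ^ 2)) := by
  apply Real.exp_le_exp.2
  apply div_le_div_of_nonneg_right ?_ (by positivity)
  nlinarith [sq_nonneg y]

lemma hs_rpow_inv_half (a : ℝ) (ha : 1 < a) : (a⁻¹ : ℝ) ^ ((1:ℝ)/2) = 1 / Real.sqrt a := by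
  rw [← Real.sqrt_eq_rpow, Real.sqrt_inv, one_div]

lemma hs_rpow_inv_3half (a : ℝ) (ha : 1 < a) : (a⁻¹ : ℝ) ^ (-(3/2):ℝ) = a * Real.sqrt a := by
  have ha0 : (0:ℝ) < a := by linarith
  rw [Real.rpow_neg (by positivity), Real.inv_rpow ha0.le, inv_inv,
    show (3/2:ℝ) = 1 + 1/2 by norm_num, Real.rpow_add ha0, Real.rpow_one,
    ← Real.sqrt_eq_rpow]

set_option maxHeartbeats 1000000 in
lemma hs_upper (σ a τ y : ℝ) (hσ : 0 < σ) (ha : 1 < a) (hτ : 0 < τ)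
    (hτa : τ < 1 / a) (hy : 0 < y) :
    (∫ z in (0:ℝ)..1, z ^ ((1:ℝ)/2) * (τ ^ 2 + (1 - τ ^ 2) * z)⁻¹ *
        Real.exp (y ^ 2 * z / (2 * σ ^ 2)))
      ≤ 2 / 3 * Real.exp (y ^ 2 * τ ^ 2 / (2 * σ ^ 2)) * τ
        + 2 * Real.exp (y ^ 2 * a⁻¹ / (2 * σ ^ 2)) * (1 / Real.sqrt a - τ)
        + 2 * Real.sqrt a * σ ^ 2 / y ^ 2 *
            (Real.exp (y ^ 2 * 1 / (2 * σ ^ 2)) - Real.exp (y ^ 2 * a⁻¹ / (2 * σ ^ 2))) := by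
  have ha0 : (0:ℝ) < a := by linarith
  have hia : (0:ℝ) < a⁻¹ := by positivity
  have hia1 : (a⁻¹ : ℝ) ≤ 1 := by
    rw [← one_div]; exact div_le_one_of_le₀ (by linarith) ha0.le
  have hτa' : τ ≤ a⁻¹ := by rw [← one_div]; exact hτa.le
  have hτ1 : τ < 1 := lt_of_le_of_lt hτa' (by nlinarith [mul_inv_cancel₀ (ne_of_gt ha0)])
  have hτ2 : τ ^ 2 ≤ τ := by nlinarith
  have hτ2a : τ ^ 2 ≤ a⁻¹ := hτ2.trans hτa'
  have hk : -(1/2 : ℝ) ≤ (1:ℝ)/2 := by norm_num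
  have hI1 := hs_integrable σ τ y hσ hτ hτ1 ((1:ℝ)/2) hk (u := 0) (v := τ ^ 2)
    le_rfl (by positivity) (by nlinarith)
  have hI2 := hs_integrable σ τ y hσ hτ hτ1 ((1:ℝ)/2) hk (u := τ ^ 2) (v := a⁻¹)
    (by positivity) hτ2a hia1
  have hI3 := hs_integrable σ τ y hσ hτ hτ1 ((1:ℝ)/2) hk (u := a⁻¹) (v := 1)
    hia.le hia1 le_rfl
  rw [← intervalIntegral.integral_add_adjacent_intervals hI1 (hI2.trans hI3),
    ← intervalIntegral.integral_add_adjacent_intervals hI2 hI3]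
  have p1 : (∫ z in (0:ℝ)..(τ^2), z ^ ((1:ℝ)/2) * (τ ^ 2 + (1 - τ ^ 2) * z)⁻¹ *
        Real.exp (y ^ 2 * z / (2 * σ ^ 2)))
      ≤ 2 / 3 * Real.exp (y ^ 2 * τ ^ 2 / (2 * σ ^ 2)) * τ := by
    have hmono : (∫ z in (0:ℝ)..(τ^2), z ^ ((1:ℝ)/2) * (τ ^ 2 + (1 - τ ^ 2) * z)⁻¹ *
          Real.exp (y ^ 2 * z / (2 * σ ^ 2)))
        ≤ ∫ z in (0:ℝ)..(τ^2),
            ((τ ^ 2)⁻¹ * Real.exp (y ^ 2 * τ ^ 2 / (2 * σ ^ 2))) * z ^ ((1:ℝ)/2) := by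
      apply intervalIntegral.integral_mono_on (by positivity) hI1
        ((intervalIntegral.intervalIntegrable_rpow' (by norm_num)).const_mul _)
      intro z hz
      have hz0 : 0 ≤ z := hz.1
      have ht2 : (0:ℝ) ≤ (1 - τ ^ 2) * z := mul_nonneg (by nlinarith) hz0
      have hden : (0:ℝ) < τ ^ 2 + (1 - τ ^ 2) * z := by positivity
      have h2 : (τ ^ 2 + (1 - τ ^ 2) * z)⁻¹ ≤ (τ ^ 2)⁻¹ := by
        apply inv_anti₀ (by positivity); linarith
      have h3 := hs_exp_mono σ y hσ hz.2
      calc z ^ ((1:ℝ)/2) * (τ ^ 2 + (1 - τ ^ 2) * z)⁻¹ * Real.exp (y ^ 2 * z / (2 * σ ^ 2))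
          ≤ z ^ ((1:ℝ)/2) * (τ ^ 2)⁻¹ * Real.exp (y ^ 2 * τ ^ 2 / (2 * σ ^ 2)) := by
            exact mul_le_mul (mul_le_mul_of_nonneg_left h2 (by positivity)) h3
              (Real.exp_pos _).le (by positivity)
        _ = ((τ ^ 2)⁻¹ * Real.exp (y ^ 2 * τ ^ 2 / (2 * σ ^ 2))) * z ^ ((1:ℝ)/2) := by ring
    refine hmono.trans ?_
    rw [intervalIntegral.integral_const_mul, integral_rpow (Or.inl (by norm_num))]
    have h32 : ((τ:ℝ) ^ 2) ^ ((1:ℝ)/2 + 1) = τ ^ 3 := by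
      rw [← Real.rpow_natCast τ 2, ← Real.rpow_mul hτ.le, ← Real.rpow_natCast τ 3]
      norm_num
    rw [h32, Real.zero_rpow (by norm_num)]
    apply le_of_eq
    field_simp
    ring
  have p2 : (∫ z in (τ^2:ℝ)..a⁻¹, z ^ ((1:ℝ)/2) * (τ ^ 2 + (1 - τ ^ 2) * z)⁻¹ *
        Real.exp (y ^ 2 * z / (2 * σ ^ 2)))
      ≤ 2 * Real.exp (y ^ 2 * a⁻¹ / (2 * σ ^ 2)) * (1 / Real.sqrt a - τ) := by
    have hmono : (∫ z in (τ^2:ℝ)..a⁻¹, z ^ ((1:ℝ)/2) * (τ ^ 2 + (1 - τ ^ 2) * z)⁻¹ *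
          Real.exp (y ^ 2 * z / (2 * σ ^ 2)))
        ≤ ∫ z in (τ^2:ℝ)..a⁻¹,
            Real.exp (y ^ 2 * a⁻¹ / (2 * σ ^ 2)) * z ^ (-(1:ℝ)/2) := by
      apply intervalIntegral.integral_mono_on hτ2a hI2
        ((intervalIntegral.intervalIntegrable_rpow' (by norm_num)).const_mul _)
      intro z hz
      have hz0 : 0 < z := lt_of_lt_of_le (by positivity) hz.1
      have ht2 : (0:ℝ) ≤ τ ^ 2 * (1 - z) := by
        apply mul_nonneg (by positivity); nlinarith [hz.2.trans hia1]
      have hden : (0:ℝ) < τ ^ 2 + (1 - τ ^ 2) * z := by nlinarith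
      have h2 : (τ ^ 2 + (1 - τ ^ 2) * z)⁻¹ ≤ z⁻¹ := by
        apply inv_anti₀ hz0; nlinarith
      have h3 := hs_exp_mono σ y hσ hz.2
      have hzz : z ^ ((1:ℝ)/2) * z⁻¹ = z ^ (-(1:ℝ)/2) := by
        rw [← Real.rpow_neg_one z, ← Real.rpow_add hz0]; norm_num
      calc z ^ ((1:ℝ)/2) * (τ ^ 2 + (1 - τ ^ 2) * z)⁻¹ * Real.exp (y ^ 2 * z / (2 * σ ^ 2))
          ≤ z ^ ((1:ℝ)/2) * z⁻¹ * Real.exp (y ^ 2 * a⁻¹ / (2 * σ ^ 2)) := by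
            exact mul_le_mul (mul_le_mul_of_nonneg_left h2 (by positivity)) h3
              (Real.exp_pos _).le (by positivity)
        _ = Real.exp (y ^ 2 * a⁻¹ / (2 * σ ^ 2)) * z ^ (-(1:ℝ)/2) := by rw [hzz]; ring
    refine hmono.trans ?_
    rw [intervalIntegral.integral_const_mul, integral_rpow (Or.inl (by norm_num))]
    have e1 : ((a:ℝ)⁻¹) ^ (-(1:ℝ)/2 + 1) = 1 / Real.sqrt a := by
      rw [show (-(1:ℝ)/2 + 1) = (1:ℝ)/2 by norm_num]; exact hs_rpow_inv_half a ha
    have e2 : ((τ:ℝ) ^ 2) ^ (-(1:ℝ)/2 + 1) = τ := by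
      rw [show (-(1:ℝ)/2 + 1) = (1:ℝ)/2 by norm_num, ← Real.sqrt_eq_rpow,
        Real.sqrt_sq hτ.le]
    rw [e1, e2]
    apply le_of_eq
    ring
  have p3 : (∫ z in ((a:ℝ)⁻¹)..1, z ^ ((1:ℝ)/2) * (τ ^ 2 + (1 - τ ^ 2) * z)⁻¹ *
        Real.exp (y ^ 2 * z / (2 * σ ^ 2)))
      ≤ 2 * Real.sqrt a * σ ^ 2 / y ^ 2 *
          (Real.exp (y ^ 2 * 1 / (2 * σ ^ 2)) - Real.exp (y ^ 2 * a⁻¹ / (2 * σ ^ 2))) := by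
    have hmono : (∫ z in ((a:ℝ)⁻¹)..1, z ^ ((1:ℝ)/2) * (τ ^ 2 + (1 - τ ^ 2) * z)⁻¹ *
          Real.exp (y ^ 2 * z / (2 * σ ^ 2)))
        ≤ ∫ z in ((a:ℝ)⁻¹)..1, Real.sqrt a * Real.exp (y ^ 2 * z / (2 * σ ^ 2)) := by
      apply intervalIntegral.integral_mono_on hia1 hI3
        (Continuous.intervalIntegrable (by fun_prop) _ _)
      intro z hz
      have hz0 : 0 < z := lt_of_lt_of_le hia hz.1
      have ht2 : (0:ℝ) ≤ τ ^ 2 * (1 - z) := by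
        apply mul_nonneg (by positivity); nlinarith [hz.2]
      have hden : (0:ℝ) < τ ^ 2 + (1 - τ ^ 2) * z := by nlinarith
      have h2 : (τ ^ 2 + (1 - τ ^ 2) * z)⁻¹ ≤ z⁻¹ := by
        apply inv_anti₀ hz0; nlinarith
      have hzz : z ^ ((1:ℝ)/2) * z⁻¹ = z ^ (-(1:ℝ)/2) := by
        rw [← Real.rpow_neg_one z, ← Real.rpow_add hz0]; norm_num
      have h4 : z ^ (-(1:ℝ)/2) ≤ Real.sqrt a := by
        have := Real.rpow_le_rpow_of_nonpos hia hz.1 (by norm_num : -(1:ℝ)/2 ≤ 0)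
        refine this.trans_eq ?_
        rw [show (-(1:ℝ)/2) = -((1:ℝ)/2) by norm_num, Real.rpow_neg hia.le,
          hs_rpow_inv_half a ha, one_div, inv_inv]
      calc z ^ ((1:ℝ)/2) * (τ ^ 2 + (1 - τ ^ 2) * z)⁻¹ * Real.exp (y ^ 2 * z / (2 * σ ^ 2))
          ≤ z ^ (-(1:ℝ)/2) * Real.exp (y ^ 2 * z / (2 * σ ^ 2)) := by
            rw [← hzz]
            exact mul_le_mul_of_nonneg_right (mul_le_mul_of_nonneg_left h2 (by positivity))
              (Real.exp_pos _).le
        _ ≤ Real.sqrt a * Real.exp (y ^ 2 * z / (2 * σ ^ 2)) :=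
            mul_le_mul_of_nonneg_right h4 (Real.exp_pos _).le
    refine hmono.trans ?_
    rw [intervalIntegral.integral_const_mul, hs_int_exp σ y hσ hy]
    apply le_of_eq
    ring
  linarith


/-- Common pointwise lower bound on `[τ², 1]`. -/
lemma hs_pt (τ z : ℝ) (hτ : 0 < τ) (hτ1 : τ < 1) (hzl : τ ^ 2 ≤ z) (hz1 : z ≤ 1) :
    z ^ (-(3:ℝ)/2) / 2 ≤ z ^ (-(1:ℝ)/2) * (τ ^ 2 + (1 - τ ^ 2) * z)⁻¹ := by
  have hz0 : 0 < z := lt_of_lt_of_le (by positivity) hzl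
  have hden : (0:ℝ) < τ ^ 2 + (1 - τ ^ 2) * z := by nlinarith
  have h2z : τ ^ 2 + (1 - τ ^ 2) * z ≤ 2 * z := by nlinarith [mul_nonneg (sq_nonneg τ) hz0.le]
  have hinv : (2 * z)⁻¹ ≤ (τ ^ 2 + (1 - τ ^ 2) * z)⁻¹ := inv_anti₀ hden h2z
  have hzz : z ^ (-(3:ℝ)/2) / 2 = z ^ (-(1:ℝ)/2) * (2 * z)⁻¹ := by
    rw [mul_inv, ← Real.rpow_neg_one z, ← mul_assoc, mul_comm (z ^ (-(1:ℝ)/2)) _,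
      mul_assoc, ← Real.rpow_add hz0]
    norm_num
    ring
  rw [hzz]
  exact mul_le_mul_of_nonneg_left hinv (by positivity)

set_option maxHeartbeats 1000000 in
lemma hs_lower (σ a τ y : ℝ) (hσ : 0 < σ) (ha : 1 < a) (hτ : 0 < τ)
    (hτa : τ < 1 / a) (hy : 0 < y) :
    1 / τ + Real.exp (y ^ 2 * τ ^ 2 / (2 * σ ^ 2)) * (1 / τ - 1 / Real.sqrt τ)
      + a * Real.sqrt a * σ ^ 2 / y ^ 2 *
          (Real.exp (y ^ 2 * a⁻¹ / (2 * σ ^ 2)) - Real.exp (y ^ 2 * τ / (2 * σ ^ 2)))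
      + σ ^ 2 / y ^ 2 *
          (Real.exp (y ^ 2 * 1 / (2 * σ ^ 2)) - Real.exp (y ^ 2 * a⁻¹ / (2 * σ ^ 2)))
    ≤ ∫ z in (0:ℝ)..1, z ^ (-(1:ℝ)/2) * (τ ^ 2 + (1 - τ ^ 2) * z)⁻¹ *
        Real.exp (y ^ 2 * z / (2 * σ ^ 2)) := by
  have ha0 : (0:ℝ) < a := by linarith
  have hia : (0:ℝ) < a⁻¹ := by positivity
  have hia1 : (a⁻¹ : ℝ) ≤ 1 := by
    rw [← one_div]; exact div_le_one_of_le₀ (by linarith) ha0.le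
  have hτa' : τ ≤ a⁻¹ := by rw [← one_div]; exact hτa.le
  have hτ1 : τ < 1 := lt_of_le_of_lt hτa' (by nlinarith [mul_inv_cancel₀ (ne_of_gt ha0)])
  have hτ2 : τ ^ 2 ≤ τ := by nlinarith
  have hτ2a : τ ^ 2 ≤ a⁻¹ := hτ2.trans hτa'
  have hk : -(1/2 : ℝ) ≤ -(1:ℝ)/2 := by norm_num
  have hI1 := hs_integrable σ τ y hσ hτ hτ1 (-(1:ℝ)/2) hk (u := 0) (v := τ ^ 2)
    le_rfl (by positivity) (by nlinarith)
  have hI2 := hs_integrable σ τ y hσ hτ hτ1 (-(1:ℝ)/2) hk (u := τ ^ 2) (v := τ)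
    (by positivity) hτ2 hτ1.le
  have hI3 := hs_integrable σ τ y hσ hτ hτ1 (-(1:ℝ)/2) hk (u := τ) (v := a⁻¹)
    hτ.le hτa' hia1
  have hI4 := hs_integrable σ τ y hσ hτ hτ1 (-(1:ℝ)/2) hk (u := a⁻¹) (v := 1)
    hia.le hia1 le_rfl
  rw [← intervalIntegral.integral_add_adjacent_intervals hI1 ((hI2.trans hI3).trans hI4),
    ← intervalIntegral.integral_add_adjacent_intervals hI2 (hI3.trans hI4),
    ← intervalIntegral.integral_add_adjacent_intervals hI3 hI4]
  have p1 : 1 / τ ≤ ∫ z in (0:ℝ)..(τ^2), z ^ (-(1:ℝ)/2) * (τ ^ 2 + (1 - τ ^ 2) * z)⁻¹ *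
      Real.exp (y ^ 2 * z / (2 * σ ^ 2)) := by
    have hmono : (∫ z in (0:ℝ)..(τ^2), (2 * τ ^ 2)⁻¹ * z ^ (-(1:ℝ)/2))
        ≤ ∫ z in (0:ℝ)..(τ^2), z ^ (-(1:ℝ)/2) * (τ ^ 2 + (1 - τ ^ 2) * z)⁻¹ *
            Real.exp (y ^ 2 * z / (2 * σ ^ 2)) := by
      apply intervalIntegral.integral_mono_on (by positivity)
        ((intervalIntegral.intervalIntegrable_rpow' (by norm_num)).const_mul _) hI1
      intro z hz
      rcases eq_or_lt_of_le hz.1 with h0 | hz0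
      · rw [← h0, Real.zero_rpow (by norm_num)]
        simp
      · have ht2 : (0:ℝ) ≤ (1 - τ ^ 2) * z := mul_nonneg (by nlinarith) hz0.le
        have hden : (0:ℝ) < τ ^ 2 + (1 - τ ^ 2) * z := by positivity
        have h2z : τ ^ 2 + (1 - τ ^ 2) * z ≤ 2 * τ ^ 2 := by
          nlinarith [mul_nonneg (sq_nonneg τ) hz0.le, hz.2]
        have hinv : (2 * τ ^ 2)⁻¹ ≤ (τ ^ 2 + (1 - τ ^ 2) * z)⁻¹ := inv_anti₀ hden h2z
        have hexp : (1:ℝ) ≤ Real.exp (y ^ 2 * z / (2 * σ ^ 2)) := by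
          rw [show (1:ℝ) = Real.exp 0 by simp]
          apply Real.exp_le_exp.2
          positivity
        calc (2 * τ ^ 2)⁻¹ * z ^ (-(1:ℝ)/2)
            ≤ (τ ^ 2 + (1 - τ ^ 2) * z)⁻¹ * z ^ (-(1:ℝ)/2) :=
              mul_le_mul_of_nonneg_right hinv (by positivity)
          _ = z ^ (-(1:ℝ)/2) * (τ ^ 2 + (1 - τ ^ 2) * z)⁻¹ * 1 := by ring
          _ ≤ z ^ (-(1:ℝ)/2) * (τ ^ 2 + (1 - τ ^ 2) * z)⁻¹ *
                Real.exp (y ^ 2 * z / (2 * σ ^ 2)) := by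
              exact mul_le_mul_of_nonneg_left hexp (by positivity)
    refine le_trans ?_ hmono
    rw [intervalIntegral.integral_const_mul, integral_rpow (Or.inl (by norm_num))]
    have e2 : ((τ:ℝ) ^ 2) ^ (-(1:ℝ)/2 + 1) = τ := by
      rw [show (-(1:ℝ)/2 + 1) = (1:ℝ)/2 by norm_num, ← Real.sqrt_eq_rpow,
        Real.sqrt_sq hτ.le]
    rw [e2, Real.zero_rpow (by norm_num)]
    apply le_of_eq
    field_simp
    ring
  have p2 : Real.exp (y ^ 2 * τ ^ 2 / (2 * σ ^ 2)) * (1 / τ - 1 / Real.sqrt τ)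
      ≤ ∫ z in ((τ:ℝ)^2)..τ, z ^ (-(1:ℝ)/2) * (τ ^ 2 + (1 - τ ^ 2) * z)⁻¹ *
          Real.exp (y ^ 2 * z / (2 * σ ^ 2)) := by
    have hmono : (∫ z in ((τ:ℝ)^2)..τ,
          (Real.exp (y ^ 2 * τ ^ 2 / (2 * σ ^ 2)) / 2) * z ^ (-(3:ℝ)/2))
        ≤ ∫ z in ((τ:ℝ)^2)..τ, z ^ (-(1:ℝ)/2) * (τ ^ 2 + (1 - τ ^ 2) * z)⁻¹ *
            Real.exp (y ^ 2 * z / (2 * σ ^ 2)) := by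
      apply intervalIntegral.integral_mono_on hτ2
        ((intervalIntegral.intervalIntegrable_rpow (Or.inr (Set.notMem_uIcc_of_lt (by positivity) hτ))).const_mul _)
        hI2
      intro z hz
      have hz0 : 0 < z := lt_of_lt_of_le (by positivity) hz.1
      have ht2 : (0:ℝ) ≤ (1 - τ ^ 2) * z := mul_nonneg (by nlinarith) hz0.le
      have hden : (0:ℝ) < τ ^ 2 + (1 - τ ^ 2) * z := by positivity
      have hpt := hs_pt τ z hτ hτ1 hz.1 (hz.2.trans hτ1.le)
      have hexp := hs_exp_mono σ y hσ hz.1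
      calc (Real.exp (y ^ 2 * τ ^ 2 / (2 * σ ^ 2)) / 2) * z ^ (-(3:ℝ)/2)
          = (z ^ (-(3:ℝ)/2) / 2) * Real.exp (y ^ 2 * τ ^ 2 / (2 * σ ^ 2)) := by ring
        _ ≤ (z ^ (-(1:ℝ)/2) * (τ ^ 2 + (1 - τ ^ 2) * z)⁻¹) *
              Real.exp (y ^ 2 * z / (2 * σ ^ 2)) :=
            mul_le_mul hpt hexp (Real.exp_pos _).le
              (mul_nonneg (Real.rpow_nonneg hz0.le _) (inv_nonneg.2 hden.le))
    refine le_trans ?_ hmono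
    rw [intervalIntegral.integral_const_mul,
      integral_rpow (Or.inr ⟨by norm_num, Set.notMem_uIcc_of_lt (by positivity) hτ⟩)]
    have e1 : (τ:ℝ) ^ (-(3:ℝ)/2 + 1) = 1 / Real.sqrt τ := by
      rw [show (-(3:ℝ)/2 + 1) = -((1:ℝ)/2) by norm_num, Real.rpow_neg hτ.le,
        ← Real.sqrt_eq_rpow, one_div]
    have e2 : ((τ:ℝ) ^ 2) ^ (-(3:ℝ)/2 + 1) = 1 / τ := by
      rw [show (-(3:ℝ)/2 + 1) = -((1:ℝ)/2) by norm_num, Real.rpow_neg (by positivity),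
        ← Real.sqrt_eq_rpow, Real.sqrt_sq hτ.le, one_div]
    rw [e1, e2]
    apply le_of_eq
    ring
  have p3 : a * Real.sqrt a * σ ^ 2 / y ^ 2 *
        (Real.exp (y ^ 2 * a⁻¹ / (2 * σ ^ 2)) - Real.exp (y ^ 2 * τ / (2 * σ ^ 2)))
      ≤ ∫ z in (τ:ℝ)..a⁻¹, z ^ (-(1:ℝ)/2) * (τ ^ 2 + (1 - τ ^ 2) * z)⁻¹ *
          Real.exp (y ^ 2 * z / (2 * σ ^ 2)) := by
    have hmono : (∫ z in (τ:ℝ)..a⁻¹,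
          (a * Real.sqrt a / 2) * Real.exp (y ^ 2 * z / (2 * σ ^ 2)))
        ≤ ∫ z in (τ:ℝ)..a⁻¹, z ^ (-(1:ℝ)/2) * (τ ^ 2 + (1 - τ ^ 2) * z)⁻¹ *
            Real.exp (y ^ 2 * z / (2 * σ ^ 2)) := by
      apply intervalIntegral.integral_mono_on hτa'
        (Continuous.intervalIntegrable (by fun_prop) _ _) hI3
      intro z hz
      have hz0 : 0 < z := lt_of_lt_of_le hτ hz.1
      have hzl : τ ^ 2 ≤ z := hτ2.trans hz.1
      have hpt := hs_pt τ z hτ hτ1 hzl (hz.2.trans hia1)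
      have hb : a * Real.sqrt a ≤ z ^ (-(3:ℝ)/2) := by
        have := Real.rpow_le_rpow_of_nonpos hz0 hz.2 (by norm_num : -(3:ℝ)/2 ≤ 0)
        calc a * Real.sqrt a = (a⁻¹ : ℝ) ^ (-(3:ℝ)/2) := by
              rw [show (-(3:ℝ)/2) = -(3/2 : ℝ) by norm_num, hs_rpow_inv_3half a ha]
          _ ≤ z ^ (-(3:ℝ)/2) := this
      calc (a * Real.sqrt a / 2) * Real.exp (y ^ 2 * z / (2 * σ ^ 2))
          ≤ (z ^ (-(3:ℝ)/2) / 2) * Real.exp (y ^ 2 * z / (2 * σ ^ 2)) := by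
            exact mul_le_mul_of_nonneg_right (by linarith) (Real.exp_pos _).le
        _ ≤ (z ^ (-(1:ℝ)/2) * (τ ^ 2 + (1 - τ ^ 2) * z)⁻¹) *
              Real.exp (y ^ 2 * z / (2 * σ ^ 2)) :=
            mul_le_mul_of_nonneg_right hpt (Real.exp_pos _).le
    refine le_trans ?_ hmono
    rw [intervalIntegral.integral_const_mul, hs_int_exp σ y hσ hy]
    apply le_of_eq
    ring
  have p4 : σ ^ 2 / y ^ 2 *
        (Real.exp (y ^ 2 * 1 / (2 * σ ^ 2)) - Real.exp (y ^ 2 * a⁻¹ / (2 * σ ^ 2)))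
      ≤ ∫ z in ((a:ℝ)⁻¹)..1, z ^ (-(1:ℝ)/2) * (τ ^ 2 + (1 - τ ^ 2) * z)⁻¹ *
          Real.exp (y ^ 2 * z / (2 * σ ^ 2)) := by
    have hmono : (∫ z in ((a:ℝ)⁻¹)..1,
          (1 / 2 : ℝ) * Real.exp (y ^ 2 * z / (2 * σ ^ 2)))
        ≤ ∫ z in ((a:ℝ)⁻¹)..1, z ^ (-(1:ℝ)/2) * (τ ^ 2 + (1 - τ ^ 2) * z)⁻¹ *
            Real.exp (y ^ 2 * z / (2 * σ ^ 2)) := by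
      apply intervalIntegral.integral_mono_on hia1
        (Continuous.intervalIntegrable (by fun_prop) _ _) hI4
      intro z hz
      have hz0 : 0 < z := lt_of_lt_of_le hia hz.1
      have hzl : τ ^ 2 ≤ z := hτ2a.trans hz.1
      have hpt := hs_pt τ z hτ hτ1 hzl hz.2
      have hb : (1:ℝ) ≤ z ^ (-(3:ℝ)/2) := by
        have := Real.rpow_le_rpow_of_nonpos hz0 hz.2 (by norm_num : -(3:ℝ)/2 ≤ 0)
        rwa [Real.one_rpow] at this
      calc (1 / 2 : ℝ) * Real.exp (y ^ 2 * z / (2 * σ ^ 2))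
          ≤ (z ^ (-(3:ℝ)/2) / 2) * Real.exp (y ^ 2 * z / (2 * σ ^ 2)) := by
            exact mul_le_mul_of_nonneg_right (by linarith) (Real.exp_pos _).le
        _ ≤ (z ^ (-(1:ℝ)/2) * (τ ^ 2 + (1 - τ ^ 2) * z)⁻¹) *
              Real.exp (y ^ 2 * z / (2 * σ ^ 2)) :=
            mul_le_mul_of_nonneg_right hpt (Real.exp_pos _).le
    refine le_trans ?_ hmono
    rw [intervalIntegral.integral_const_mul, hs_int_exp σ y hσ hy]
    apply le_of_eq
    ring
  linarith

end HSAux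

set_option maxHeartbeats 1000000 in
/-- Pre-form of the bound. -/
theorem hsT_upper_bound_two'' (σ a τ : ℝ) (hσ : 0 < σ) (ha : 1 < a)
    (hτ : 0 < τ) (hτa : τ < 1 / a) :
    ∀ y : ℝ, 0 < y →
      (fun y => y * ((∫ z in (0:ℝ)..1, z ^ ((1:ℝ)/2) * (τ ^ 2 + (1 - τ ^ 2) * z)⁻¹ *
        Real.exp (y ^ 2 * z / (2 * σ ^ 2))) /
        (∫ z in (0:ℝ)..1, z ^ (-(1:ℝ)/2) * (τ ^ 2 + (1 - τ ^ 2) * z)⁻¹ *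
        Real.exp (y ^ 2 * z / (2 * σ ^ 2))))) y ≤ y *
        ((2 / 3 * Real.exp (τ ^ 2 * y ^ 2 / (2 * σ ^ 2)) * τ +
            2 * Real.exp (y ^ 2 / (2 * a * σ ^ 2)) * (1 / Real.sqrt a - τ) +
            2 * Real.sqrt a * σ ^ 2 / y ^ 2 *
              (Real.exp (y ^ 2 / (2 * σ ^ 2)) - Real.exp (y ^ 2 / (2 * a * σ ^ 2)))) /
          (1 / τ + Real.exp (τ ^ 2 * y ^ 2 / (2 * σ ^ 2)) * (1 / τ - 1 / Real.sqrt τ) +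
            a * Real.sqrt a * σ ^ 2 / y ^ 2 *
              (Real.exp (y ^ 2 / (2 * a * σ ^ 2)) - Real.exp (τ * y ^ 2 / (2 * σ ^ 2))) +
            σ ^ 2 / y ^ 2 *
              (Real.exp (y ^ 2 / (2 * σ ^ 2)) - Real.exp (y ^ 2 / (2 * a * σ ^ 2))))) := by
  intro y hy
  have ha0 : (0:ℝ) < a := by linarith
  have hia : (0:ℝ) < a⁻¹ := by positivity
  have hia1 : (a⁻¹ : ℝ) ≤ 1 := by
    rw [← one_div]; exact div_le_one_of_le₀ (by linarith) ha0.le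
  have hτa' : τ ≤ a⁻¹ := by rw [← one_div]; exact hτa.le
  have hτ1 : τ < 1 := lt_of_le_of_lt hτa' (by nlinarith [mul_inv_cancel₀ (ne_of_gt ha0)])
  have hE1 : Real.exp (τ ^ 2 * y ^ 2 / (2 * σ ^ 2)) = Real.exp (y ^ 2 * τ ^ 2 / (2 * σ ^ 2)) := by
    congr 1; ring
  have hE2 : Real.exp (y ^ 2 / (2 * a * σ ^ 2)) = Real.exp (y ^ 2 * a⁻¹ / (2 * σ ^ 2)) := by
    congr 1; field_simp
  have hE3 : Real.exp (y ^ 2 / (2 * σ ^ 2)) = Real.exp (y ^ 2 * 1 / (2 * σ ^ 2)) := by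
    congr 1; ring
  have hE4 : Real.exp (τ * y ^ 2 / (2 * σ ^ 2)) = Real.exp (y ^ 2 * τ / (2 * σ ^ 2)) := by
    congr 1; ring
  rw [hE2, hE1, hE4, hE3]
  simp only []
  apply mul_le_mul_of_nonneg_left ?_ hy.le
  have hu := HSAux.hs_upper σ a τ y hσ ha hτ hτa hy
  have hl := HSAux.hs_lower σ a τ y hσ ha hτ hτa hy
  -- positivity facts
  have hsτ1 : Real.sqrt τ ≤ 1 := Real.sqrt_le_one.2 hτ1.le
  have hsτ0 : 0 < Real.sqrt τ := Real.sqrt_pos.2 hτ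
  have hττ : τ ≤ Real.sqrt τ := by
    nlinarith [Real.sq_sqrt hτ.le, mul_nonneg hsτ0.le (sub_nonneg.2 hsτ1)]
  have ht2 : (0:ℝ) ≤ Real.exp (y ^ 2 * τ ^ 2 / (2 * σ ^ 2)) * (1 / τ - 1 / Real.sqrt τ) := by
    apply mul_nonneg (Real.exp_pos _).le
    have := one_div_le_one_div_of_le hτ hττ
    linarith
  have ht3 : (0:ℝ) ≤ a * Real.sqrt a * σ ^ 2 / y ^ 2 *
      (Real.exp (y ^ 2 * a⁻¹ / (2 * σ ^ 2)) - Real.exp (y ^ 2 * τ / (2 * σ ^ 2))) := by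
    apply mul_nonneg (by positivity)
    exact sub_nonneg.2 (HSAux.hs_exp_mono σ y hσ hτa')
  have ht4 : (0:ℝ) ≤ σ ^ 2 / y ^ 2 *
      (Real.exp (y ^ 2 * 1 / (2 * σ ^ 2)) - Real.exp (y ^ 2 * a⁻¹ / (2 * σ ^ 2))) := by
    apply mul_nonneg (by positivity)
    exact sub_nonneg.2 (HSAux.hs_exp_mono σ y hσ hia1)
  have hD0 : (0:ℝ) < 1 / τ + Real.exp (y ^ 2 * τ ^ 2 / (2 * σ ^ 2)) * (1 / τ - 1 / Real.sqrt τ)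
      + a * Real.sqrt a * σ ^ 2 / y ^ 2 *
          (Real.exp (y ^ 2 * a⁻¹ / (2 * σ ^ 2)) - Real.exp (y ^ 2 * τ / (2 * σ ^ 2)))
      + σ ^ 2 / y ^ 2 *
          (Real.exp (y ^ 2 * 1 / (2 * σ ^ 2)) - Real.exp (y ^ 2 * a⁻¹ / (2 * σ ^ 2))) := by
    have : (0:ℝ) < 1 / τ := by positivity
    linarith
  have hsa0 : 0 < Real.sqrt a := Real.sqrt_pos.2 ha0
  have hsa1 : 1 ≤ Real.sqrt a := by
    rw [show (1:ℝ) = Real.sqrt 1 by simp]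
    exact Real.sqrt_le_sqrt ha.le
  have hsaa : Real.sqrt a ≤ a := by
    nlinarith [Real.sq_sqrt ha0.le]
  have hτsa : τ ≤ 1 / Real.sqrt a := by
    have h1 : 1 / a ≤ 1 / Real.sqrt a := one_div_le_one_div_of_le hsa0 hsaa
    linarith
  have hN0 : (0:ℝ) ≤ 2 / 3 * Real.exp (y ^ 2 * τ ^ 2 / (2 * σ ^ 2)) * τ +
      2 * Real.exp (y ^ 2 * a⁻¹ / (2 * σ ^ 2)) * (1 / Real.sqrt a - τ) +
      2 * Real.sqrt a * σ ^ 2 / y ^ 2 *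
        (Real.exp (y ^ 2 * 1 / (2 * σ ^ 2)) - Real.exp (y ^ 2 * a⁻¹ / (2 * σ ^ 2))) := by
    have h1 : (0:ℝ) ≤ 2 / 3 * Real.exp (y ^ 2 * τ ^ 2 / (2 * σ ^ 2)) * τ := by positivity
    have h2 : (0:ℝ) ≤ 2 * Real.exp (y ^ 2 * a⁻¹ / (2 * σ ^ 2)) * (1 / Real.sqrt a - τ) := by
      apply mul_nonneg (by positivity); linarith
    have h3 : (0:ℝ) ≤ 2 * Real.sqrt a * σ ^ 2 / y ^ 2 *
        (Real.exp (y ^ 2 * 1 / (2 * σ ^ 2)) - Real.exp (y ^ 2 * a⁻¹ / (2 * σ ^ 2))) := by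
      apply mul_nonneg (by positivity)
      exact sub_nonneg.2 (HSAux.hs_exp_mono σ y hσ hia1)
    linarith
  exact div_le_div₀ hN0 hu hD0 hl


/-- Lemma A.2, part 2: explicit upper bound on the horseshoe estimator. -/
theorem hsT_upper_bound_two (σ a τ : ℝ) (hσ : 0 < σ) (ha : 1 < a)
    (hτ : 0 < τ) (hτa : τ < 1 / a) :
    ∀ y : ℝ, 0 < y →
      hsT σ τ y ≤ y *
        ((2 / 3 * Real.exp (τ ^ 2 * y ^ 2 / (2 * σ ^ 2)) * τ +
            2 * Real.exp (y ^ 2 / (2 * a * σ ^ 2)) * (1 / Real.sqrt a - τ) +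
            2 * Real.sqrt a * σ ^ 2 / y ^ 2 *
              (Real.exp (y ^ 2 / (2 * σ ^ 2)) - Real.exp (y ^ 2 / (2 * a * σ ^ 2)))) /
          (1 / τ + Real.exp (τ ^ 2 * y ^ 2 / (2 * σ ^ 2)) * (1 / τ - 1 / Real.sqrt τ) +
            a * Real.sqrt a * σ ^ 2 / y ^ 2 *
              (Real.exp (y ^ 2 / (2 * a * σ ^ 2)) - Real.exp (τ * y ^ 2 / (2 * σ ^ 2))) +
            σ ^ 2 / y ^ 2 *
              (Real.exp (y ^ 2 / (2 * σ ^ 2)) - Real.exp (y ^ 2 / (2 * a * σ ^ 2))))) := by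
  intro y hy
  have h := hsT_upper_bound_two'' σ a τ hσ ha hτ hτa y hy
  have hk : (-(1/2) : ℝ) = -(1:ℝ)/2 := by norm_num
  have hhsT : hsT σ τ y = y * ((∫ z in (0:ℝ)..1, z ^ ((1:ℝ)/2) * (τ ^ 2 + (1 - τ ^ 2) * z)⁻¹ *
      Real.exp (y ^ 2 * z / (2 * σ ^ 2))) /
      (∫ z in (0:ℝ)..1, z ^ (-(1:ℝ)/2) * (τ ^ 2 + (1 - τ ^ 2) * z)⁻¹ *
      Real.exp (y ^ 2 * z / (2 * σ ^ 2)))) := by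
    rw [hsT, hsI, hsI, hk, mul_div_assoc]
  rw [hhsT]
  exact h
end

section
/- Fix σ > 0 and c > 2. Then sup over all y ∈ ℝ with |y| ≥ √(c σ² log(1/τ)) of |T_τ(y) − y| tends to 0 as τ ↓ 0; that is, for every ε > 0 there exists τ₀ ∈ (0,1) such that for all τ ∈ (0, τ₀) and all y with |y| ≥ √(c σ² log(1/τ)), one has |T_τ(y) − y| ≤ ε. -/
/-!
With `a = y² / (2σ²)` and `K(z) = (τ² + (1 - τ²) z)⁻¹` we have
`T_τ(y) - y = -y (I_{-1/2} - I_{1/2}) / I_{-1/2}`.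
Since `K ≥ 1` on `[0, 1]`, the denominator is at least `∫₀¹ e^{az} ≥ e^a / (2a)`.
The numerator is `∫₀¹ z^{-1/2} (1 - z) K(z) e^{az} dz`; below a cut-off `w` we use
`K(z) ≤ 2 / (τ² + z)`, whose integral against `z^{-1/2}` is `(2/τ) arctan (1/τ) ≤ π / τ`,
and above `w` we use `K(z) ≤ 1 / z`. Hence
`|T_τ(y) - y| ≤ |y| (4π a e^{-(1-w)a} / τ + 2 w^{-3/2} / a)`.
For `|y| ≥ √(cσ² log(1/τ))` we have `1/τ ≤ e^{2a/c}` and `a → ∞` as `τ → 0`, so with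
`w = (1 - 2/c) / 2` the bound is `O(a^{3/2} e^{-wa} + a^{-1/2}) → 0`.
-/

open MeasureTheory ProbabilityTheory Real Filter Set

open Topology

noncomputable def hsKernel (τ z : ℝ) : ℝ := (τ ^ 2 + (1 - τ ^ 2) * z)⁻¹

noncomputable def hsIntegral (τ k a : ℝ) : ℝ :=
  ∫ z in (0:ℝ)..1, z ^ k * hsKernel τ z * exp (a * z)

theorem hsI_eq_hsIntegral (σ τ k y : ℝ) :
    hsI σ τ k y = hsIntegral τ k (y ^ 2 / (2 * σ ^ 2)) := by
  simp only [hsI, hsIntegral, hsKernel, mul_div_right_comm]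

section Kernel

variable {τ z : ℝ}

theorem hsKernel_pos (hτ : 0 < τ) (hτ1 : τ ≤ 1) (hz : 0 ≤ z) : 0 < hsKernel τ z := by
  have : 0 ≤ (1 - τ ^ 2) * z := mul_nonneg (by nlinarith) hz
  exact inv_pos.2 (by positivity)

theorem one_le_hsKernel (hτ : 0 < τ) (hτ1 : τ ≤ 1) (hz : 0 ≤ z) (hz1 : z ≤ 1) :
    1 ≤ hsKernel τ z := by
  have : (1 - τ ^ 2) * z ≤ 1 - τ ^ 2 := mul_le_of_le_one_right (by nlinarith) hz1
  exact one_le_inv₀ (inv_pos.1 (hsKernel_pos hτ hτ1 hz)) |>.2 (by linarith)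

theorem hsKernel_le_inv_sq (hτ : 0 < τ) (hτ1 : τ ≤ 1) (hz : 0 ≤ z) :
    hsKernel τ z ≤ (τ ^ 2)⁻¹ :=
  inv_anti₀ (by positivity) (le_add_of_nonneg_right (mul_nonneg (by nlinarith) hz))

theorem hsKernel_le_inv (hz : 0 < z) (hz1 : z ≤ 1) :
    hsKernel τ z ≤ z⁻¹ :=
  inv_anti₀ hz (by nlinarith [mul_nonneg (sq_nonneg τ) (sub_nonneg.2 hz1)])

theorem hsKernel_le_two_div (hτ : 0 < τ) (hτ1 : τ ≤ 1) (hz : 0 ≤ z) (hz1 : z ≤ 1) :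
    hsKernel τ z ≤ 2 / (τ ^ 2 + z) := by
  rw [hsKernel, ← inv_div]
  refine inv_anti₀ (by positivity) ?_
  nlinarith [mul_nonneg (sq_nonneg τ) (sub_nonneg.2 hz1),
    mul_nonneg hz (by nlinarith : 0 ≤ 1 - τ ^ 2)]

end Kernel

theorem intervalIntegrable_hsIntegrand {τ k : ℝ} (hτ : 0 < τ) (hτ1 : τ ≤ 1) (hk : -1 < k)
    (a : ℝ) : IntervalIntegrable (fun z => z ^ k * hsKernel τ z * exp (a * z)) volume 0 1 := by
  refine ((intervalIntegral.intervalIntegrable_rpow' hk).const_mul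
    ((τ ^ 2)⁻¹ * exp |a|)).mono_fun ?_ ?_
  · exact (by unfold hsKernel; fun_prop : Measurable _).aestronglyMeasurable
  filter_upwards [ae_restrict_mem measurableSet_uIoc] with z hz
  rw [uIoc_of_le zero_le_one] at hz
  have hK := hsKernel_pos hτ hτ1 hz.1.le
  have hzk : 0 ≤ z ^ k := rpow_nonneg hz.1.le k
  rw [norm_of_nonneg (by positivity), norm_of_nonneg (by positivity), mul_comm _ (z ^ k),
    mul_assoc]
  have hexp : a * z ≤ |a| := (mul_le_mul_of_nonneg_right (le_abs_self a) hz.1.le).trans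
    (mul_le_of_le_one_right (abs_nonneg a) hz.2)
  gcongr
  exact hsKernel_le_inv_sq hτ hτ1 hz.1.le

section Calculus

variable {τ a : ℝ}

theorem hasDerivAt_arctan_sqrt_div (hτ : 0 < τ) {z : ℝ} (hz : 0 < z) :
    HasDerivAt (fun z => 2 / τ * arctan (√z / τ)) (z ^ (-(1/2) : ℝ) * (τ ^ 2 + z)⁻¹) z := by
  have h := (((hasDerivAt_sqrt hz.ne').div_const τ).arctan).const_mul (2 / τ)
  refine h.congr_deriv ?_
  have hs : 0 < √z := sqrt_pos.2 hz
  rw [rpow_neg hz.le, ← sqrt_eq_rpow, div_pow, sq_sqrt hz.le]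
  field_simp

theorem intervalIntegrable_rpow_neg_half_mul_inv_sq_add (hτ : 0 < τ) :
    IntervalIntegrable (fun z => z ^ (-(1/2) : ℝ) * (τ ^ 2 + z)⁻¹) volume 0 1 := by
  have hpos {z : ℝ} (hz : z ∈ Ioo (min 0 1) (max (0:ℝ) 1)) : 0 < z := by simpa using hz.1
  exact intervalIntegral.intervalIntegrable_deriv_of_nonneg (by fun_prop)
    (fun z hz => hasDerivAt_arctan_sqrt_div hτ (hpos hz))
    (fun z hz => by have := hpos hz; positivity)

theorem integral_rpow_neg_half_mul_inv_sq_add_le (hτ : 0 < τ) :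
    ∫ z in (0:ℝ)..1, z ^ (-(1/2) : ℝ) * (τ ^ 2 + z)⁻¹ ≤ π / τ := by
  rw [intervalIntegral.integral_eq_sub_of_hasDerivAt_of_le zero_le_one (by fun_prop)
    (fun z hz => hasDerivAt_arctan_sqrt_div hτ hz.1)
    (intervalIntegrable_rpow_neg_half_mul_inv_sq_add hτ)]
  have := arctan_lt_pi_div_two (√1 / τ)
  simp only [sqrt_zero, zero_div, arctan_zero, mul_zero, sub_zero]
  calc 2 / τ * arctan (√1 / τ) ≤ 2 / τ * (π / 2) := by gcongr
    _ = π / τ := by ring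

theorem integral_one_sub_mul_exp_le (ha : 0 < a) :
    ∫ z in (0:ℝ)..1, (1 - z) * exp (a * z) ≤ exp a / a ^ 2 := by
  have hderiv (z : ℝ) : HasDerivAt (fun z => exp (a * z) * (1 / a ^ 2 + (1 - z) / a))
      ((1 - z) * exp (a * z)) z := by
    have := (((hasDerivAt_id z).const_mul a).exp).mul
      ((((hasDerivAt_id z).const_sub 1).div_const a).const_add (1 / a ^ 2))
    refine this.congr_deriv ?_
    simp only [id]
    field_simp
    ring
  rw [intervalIntegral.integral_eq_sub_of_hasDerivAt (fun z _ => hderiv z)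
    (Continuous.intervalIntegrable (by fun_prop) _ _)]
  have : 0 ≤ exp (a * 0) * (1 / a ^ 2 + (1 - 0) / a) := by positivity
  simp only [mul_one, sub_self, zero_div, add_zero, one_div, ← div_eq_mul_inv] at this ⊢
  linarith

theorem integral_exp_mul_zero_one (ha : a ≠ 0) :
    ∫ z in (0:ℝ)..1, exp (a * z) = (exp a - 1) / a := by
  rw [intervalIntegral.integral_comp_mul_left (fun z => exp z) ha, integral_exp]
  simp [div_eq_inv_mul]

end Calculus

section Integral

variable {τ a : ℝ}

theorem exp_div_two_mul_le_hsIntegral (hτ : 0 < τ) (hτ1 : τ ≤ 1) (ha : 1 ≤ a) :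
    exp a / (2 * a) ≤ hsIntegral τ (-(1/2)) a := by
  have ha0 : 0 < a := by linarith
  have htwo : 2 ≤ exp a := by linarith [add_one_le_exp a]
  calc exp a / (2 * a) ≤ (exp a - 1) / a := by
        rw [div_le_div_iff₀ (by positivity) ha0]; nlinarith
    _ = ∫ z in (0:ℝ)..1, exp (a * z) := (integral_exp_mul_zero_one ha0.ne').symm
    _ ≤ hsIntegral τ (-(1/2)) a := by
      refine intervalIntegral.integral_mono_on_of_le_Ioo zero_le_one
        (Continuous.intervalIntegrable (by fun_prop) _ _)
        (intervalIntegrable_hsIntegrand hτ hτ1 (by norm_num) a) fun z hz => ?_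
      have h1 : 1 ≤ z ^ (-(1/2) : ℝ) :=
        one_le_rpow_of_pos_of_le_one_of_nonpos hz.1 hz.2.le (by norm_num)
      have h2 := one_le_hsKernel hτ hτ1 hz.1.le hz.2.le
      exact le_mul_of_one_le_left (exp_pos _).le (one_le_mul_of_one_le_of_one_le h1 h2)

theorem hsIntegral_half_le (hτ : 0 < τ) (hτ1 : τ ≤ 1) (a : ℝ) :
    hsIntegral τ (1/2) a ≤ hsIntegral τ (-(1/2)) a := by
  refine intervalIntegral.integral_mono_on_of_le_Ioo zero_le_one
    (intervalIntegrable_hsIntegrand hτ hτ1 (by norm_num) a)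
    (intervalIntegrable_hsIntegrand hτ hτ1 (by norm_num) a) fun z hz => ?_
  have := hsKernel_pos hτ hτ1 hz.1.le
  exact mul_le_mul_of_nonneg_right (mul_le_mul_of_nonneg_right
    (rpow_le_rpow_of_exponent_ge hz.1 hz.2.le (by norm_num)) this.le) (exp_pos _).le

theorem hsIntegrand_sub_le (hτ : 0 < τ) (hτ1 : τ ≤ 1) (ha : 0 ≤ a) {w z : ℝ} (hw : 0 < w)
    (hz : z ∈ Ioo (0:ℝ) 1) :
    z ^ (-(1/2) : ℝ) * hsKernel τ z * exp (a * z) - z ^ (1/2 : ℝ) * hsKernel τ z * exp (a * z)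
      ≤ exp (a * w) * (2 * (z ^ (-(1/2) : ℝ) * (τ ^ 2 + z)⁻¹))
        + w ^ (-(3/2) : ℝ) * ((1 - z) * exp (a * z)) := by
  obtain ⟨hz0, hz1⟩ := hz
  have hzr : z ^ (1/2 : ℝ) = z * z ^ (-(1/2) : ℝ) := by
    rw [← rpow_one_add' hz0.le (by norm_num)]; norm_num
  have hK := hsKernel_pos hτ hτ1 hz0.le
  have hzr0 := rpow_pos_of_pos hz0 (-(1/2) : ℝ)
  have hw0 := rpow_pos_of_pos hw (-(3/2) : ℝ)
  have h1z : 0 < 1 - z := by linarith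
  rw [hzr, ← sub_mul, ← sub_mul, ← one_sub_mul]
  rcases le_total z w with hzw | hwz
  · have hK2 := hsKernel_le_two_div hτ hτ1 hz0.le hz1.le
    calc (1 - z) * z ^ (-(1/2) : ℝ) * hsKernel τ z * exp (a * z)
        ≤ 1 * z ^ (-(1/2) : ℝ) * (2 / (τ ^ 2 + z)) * exp (a * w) := by gcongr; linarith
      _ = exp (a * w) * (2 * (z ^ (-(1/2) : ℝ) * (τ ^ 2 + z)⁻¹)) := by ring
      _ ≤ _ := le_add_of_nonneg_right (by positivity)
  · have hKw : z ^ (-(1/2) : ℝ) * hsKernel τ z ≤ w ^ (-(3/2) : ℝ) :=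
      calc z ^ (-(1/2) : ℝ) * hsKernel τ z ≤ z ^ (-(1/2) : ℝ) * z⁻¹ := by
            gcongr; exact hsKernel_le_inv hz0 hz1.le
        _ = z ^ (-(3/2) : ℝ) := by rw [← rpow_neg_one, ← rpow_add hz0]; norm_num
        _ ≤ w ^ (-(3/2) : ℝ) := rpow_le_rpow_of_nonpos hw hwz (by norm_num)
    calc (1 - z) * z ^ (-(1/2) : ℝ) * hsKernel τ z * exp (a * z)
        = (z ^ (-(1/2) : ℝ) * hsKernel τ z) * ((1 - z) * exp (a * z)) := by ring
      _ ≤ w ^ (-(3/2) : ℝ) * ((1 - z) * exp (a * z)) := by gcongr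
      _ ≤ _ := le_add_of_nonneg_left (by positivity)

theorem hsIntegral_sub_le (hτ : 0 < τ) (hτ1 : τ ≤ 1) (ha : 0 < a) {w : ℝ} (hw : 0 < w) :
    hsIntegral τ (-(1/2)) a - hsIntegral τ (1/2) a
      ≤ exp (a * w) * (2 * (π / τ)) + w ^ (-(3/2) : ℝ) * (exp a / a ^ 2) := by
  have hf := intervalIntegrable_rpow_neg_half_mul_inv_sq_add hτ
  have hg : IntervalIntegrable (fun z => (1 - z) * exp (a * z)) volume 0 1 :=
    Continuous.intervalIntegrable (by fun_prop) _ _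
  rw [hsIntegral, hsIntegral, ← intervalIntegral.integral_sub
    (intervalIntegrable_hsIntegrand hτ hτ1 (by norm_num) a)
    (intervalIntegrable_hsIntegrand hτ hτ1 (by norm_num) a)]
  calc _ ≤ ∫ z in (0:ℝ)..1, (exp (a * w) * (2 * (z ^ (-(1/2) : ℝ) * (τ ^ 2 + z)⁻¹))
        + w ^ (-(3/2) : ℝ) * ((1 - z) * exp (a * z))) :=
      intervalIntegral.integral_mono_on_of_le_Ioo zero_le_one
        ((intervalIntegrable_hsIntegrand hτ hτ1 (by norm_num) a).sub
          (intervalIntegrable_hsIntegrand hτ hτ1 (by norm_num) a))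
        (((hf.const_mul 2).const_mul _).add (hg.const_mul _))
        fun z hz => hsIntegrand_sub_le hτ hτ1 ha.le hw hz
    _ = exp (a * w) * (2 * ∫ z in (0:ℝ)..1, z ^ (-(1/2) : ℝ) * (τ ^ 2 + z)⁻¹)
        + w ^ (-(3/2) : ℝ) * ∫ z in (0:ℝ)..1, (1 - z) * exp (a * z) := by
      rw [intervalIntegral.integral_add ((hf.const_mul 2).const_mul _) (hg.const_mul _),
        intervalIntegral.integral_const_mul, intervalIntegral.integral_const_mul,
        intervalIntegral.integral_const_mul]
    _ ≤ _ := by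
      have := rpow_pos_of_pos hw (-(3/2) : ℝ)
      gcongr
      · exact integral_rpow_neg_half_mul_inv_sq_add_le hτ
      · exact integral_one_sub_mul_exp_le ha

end Integral

theorem abs_hsT_sub_self_le {σ τ y a w : ℝ} (hτ : 0 < τ) (hτ1 : τ ≤ 1) (hw : 0 < w)
    (ha : y ^ 2 / (2 * σ ^ 2) = a) (ha1 : 1 ≤ a) :
    |hsT σ τ y - y|
      ≤ |y| * (4 * π * a * exp (-(1 - w) * a) / τ + 2 * w ^ (-(3/2) : ℝ) / a) := by
  have ha0 : 0 < a := by linarith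
  rw [hsT, hsI_eq_hsIntegral, hsI_eq_hsIntegral, ha]
  set J := hsIntegral τ (-(1/2)) a
  have hlow : exp a / (2 * a) ≤ J := exp_div_two_mul_le_hsIntegral hτ hτ1 ha1
  have hJ : 0 < J := lt_of_lt_of_le (by positivity) hlow
  have hsub : y * hsIntegral τ (1/2) a / J - y = -(y * (J - hsIntegral τ (1/2) a) / J) := by
    field_simp
    ring
  rw [hsub, abs_neg, abs_div, abs_mul, abs_of_pos hJ, mul_div_assoc,
    abs_of_nonneg (sub_nonneg.2 (hsIntegral_half_le hτ hτ1 a))]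
  gcongr |y| * ?_
  have := rpow_pos_of_pos hw (-(3/2) : ℝ)
  calc (J - hsIntegral τ (1/2) a) / J
      ≤ (exp (a * w) * (2 * (π / τ)) + w ^ (-(3/2) : ℝ) * (exp a / a ^ 2)) / (exp a / (2 * a)) :=
        div_le_div₀ (by positivity) (hsIntegral_sub_le hτ hτ1 ha0 hw) (by positivity) hlow
    _ = _ := by
      rw [show -(1 - w) * a = a * w - a by ring, exp_sub]
      field_simp
      ring

theorem abs_hsT_sub_self_le_of_log_le {σ τ y a w b : ℝ} (hσ : 0 < σ) (hτ : 0 < τ) (hτ1 : τ ≤ 1)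
    (hw : 0 < w) (ha : y ^ 2 / (2 * σ ^ 2) = a) (ha1 : 1 ≤ a) (hτa : log (1 / τ) ≤ b * a) :
    |hsT σ τ y - y|
      ≤ σ * √2 * (√a * (4 * π * a * exp (-(1 - w - b) * a) + 2 * w ^ (-(3/2) : ℝ) / a)) := by
  have hy : |y| = σ * √2 * √a := by
    rw [← ha, sqrt_div' _ (by positivity), sqrt_sq_eq_abs, sqrt_mul' _ (sq_nonneg σ),
      sqrt_sq hσ.le]
    field_simp
  have hτ' : exp (-(1 - w) * a) / τ ≤ exp (-(1 - w - b) * a) := by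
    rw [div_eq_mul_inv, ← one_div, ← exp_log (one_div_pos.2 hτ), ← exp_add]
    exact exp_le_exp.2 (by linarith)
  have := rpow_pos_of_pos hw (-(3/2) : ℝ)
  calc |hsT σ τ y - y|
      ≤ |y| * (4 * π * a * exp (-(1 - w) * a) / τ + 2 * w ^ (-(3/2) : ℝ) / a) :=
        abs_hsT_sub_self_le hτ hτ1 hw ha ha1
    _ ≤ _ := by
      rw [hy, mul_assoc, mul_div_assoc, mul_div_assoc]
      gcongr

theorem tendsto_sqrt_mul_mul_exp_neg_add_div {κ : ℝ} (hκ : 0 < κ) (C₁ C₂ : ℝ) :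
    Tendsto (fun a => √a * (C₁ * a * exp (-κ * a) + C₂ / a)) atTop (𝓝 0) := by
  have h := ((tendsto_rpow_mul_exp_neg_mul_atTop_nhds_zero (3/2) κ hκ).const_mul C₁).add
    ((tendsto_rpow_neg_atTop (y := 1/2) (by norm_num)).const_mul C₂)
  rw [mul_zero, mul_zero, add_zero] at h
  refine h.congr' ?_
  filter_upwards [eventually_gt_atTop 0] with a ha
  have h32 : a ^ (3/2 : ℝ) = √a * a := by rw [sqrt_eq_rpow, ← rpow_add_one ha.ne']; norm_num
  have h12 : a ^ (-(1/2) : ℝ) = √a / a := by rw [sqrt_eq_rpow, ← rpow_sub_one ha.ne']; norm_num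
  rw [h32, h12]
  ring

theorem log_one_div_le_of_sqrt_le_abs {σ c τ y : ℝ} (hσ : 0 < σ) (hc : 0 < c)
    (hy : √(c * σ ^ 2 * log (1 / τ)) ≤ |y|) : log (1 / τ) ≤ 2 / c * (y ^ 2 / (2 * σ ^ 2)) := by
  have : c * σ ^ 2 * log (1 / τ) ≤ y ^ 2 :=
    (sqrt_le_sqrt_iff (sq_nonneg y)).1 (by rwa [sqrt_sq_eq_abs])
  rw [show 2 / c * (y ^ 2 / (2 * σ ^ 2)) = y ^ 2 / (c * σ ^ 2) by field_simp,
    le_div_iff₀ (by positivity)]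
  linarith

/-- Lemma A.3: `sup_{|y| ≥ √(cσ² log(1/τ))} |T_τ(y) − y| → 0` as `τ ↓ 0`, for any `c > 2`. -/
theorem hsT_shrinkage_vanishes (σ c : ℝ) (hσ : 0 < σ) (hc : 2 < c) :
    ∀ ε : ℝ, 0 < ε → ∃ τ₀ : ℝ, τ₀ ∈ Set.Ioo (0:ℝ) 1 ∧
      ∀ τ : ℝ, τ ∈ Set.Ioo (0:ℝ) τ₀ →
      ∀ y : ℝ, Real.sqrt (c * σ ^ 2 * Real.log (1 / τ)) ≤ |y| →
        |hsT σ τ y - y| ≤ ε := by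
  intro ε hε
  have hc0 : 0 < c := by linarith
  set w := (1 - 2 / c) / 2 with hw_def
  have hw : 0 < w := by have := (div_lt_one hc0).2 hc; linarith
  have hlim := (tendsto_sqrt_mul_mul_exp_neg_add_div (show 0 < 1 - w - 2 / c by linarith) (4 * π)
    (2 * w ^ (-(3/2) : ℝ))).const_mul (σ * √2)
  rw [mul_zero] at hlim
  obtain ⟨A, hA⟩ := eventually_atTop.1 (hlim.eventually (ge_mem_nhds hε))
  have hτ₀ : exp (-(2 / c * max A 1)) < 1 := exp_lt_one_iff.2 (neg_neg_of_pos (by positivity))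
  refine ⟨exp (-(2 / c * max A 1)), ⟨exp_pos _, hτ₀⟩, ?_⟩
  rintro τ ⟨hτ0, hτ⟩ y hy
  have hlog := log_one_div_le_of_sqrt_le_abs hσ hc0 hy
  have hAa : max A 1 < y ^ 2 / (2 * σ ^ 2) := by
    have := log_lt_log hτ0 hτ
    rw [log_exp, ← neg_lt_neg_iff, ← log_inv, ← one_div, neg_neg] at this
    exact lt_of_mul_lt_mul_left (this.trans_le hlog) (by positivity)
  exact (abs_hsT_sub_self_le_of_log_le hσ hτ0 (hτ.trans hτ₀).le hw rfl
    (le_of_max_le_right hAa.le) hlog).trans (hA _ (le_of_max_le_left hAa.le))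
end
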